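/- arXiv:2308.03812 — 8 statements merged into one kernel-verified Lean document; each statement's English description precedes it below -/
import Mathlib

section
/- Let n ∈ ℕ with n ≥ 2 and let φ : ℝ → ℝ be continuous and such that lim_{x→−∞} φ(x) and lim_{x→∞} φ(x) exist, are finite, and are distinct. Then for every d > 0 there exists a two-layer network f ∈ N²_φ(ℝⁿ) such that for every one-layer network g ∈ N¹_φ(ℝⁿ) one has sup_{x∈ℝⁿ} |f(x) − g(x)| ≥ d. -/
open Filter Topology MeasureTheory

noncomputable section

/-- `ℝⁿ` with the Euclidean norm. -/
abbrev E (n : ℕ) := EuclideanSpace ℝ (Fin n)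

/-- Closure of a set of real-valued functions with respect to the supremum
norm over the whole domain (global uniform convergence). -/
def UnifClosure {α : Type*} (S : Set (α → ℝ)) : Set (α → ℝ) :=
  {f | ∀ ε : ℝ, 0 < ε → ∃ g ∈ S, ∀ x, |f x - g x| ≤ ε}

/-- The space `N^l_φ(ℝⁿ)` of `l`-hidden-layer neural networks (the value at
`l = 0` is a dummy). -/
def NN (φ : ℝ → ℝ) (n : ℕ) : ℕ → Set (E n → ℝ)
  | 0 => {0}
  | 1 => ↑(Submodule.span ℝ
      {f : E n → ℝ | ∃ (a : E n) (b : ℝ), f = fun x => φ ((inner ℝ a x : ℝ) + b)})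
  | (l+2) => ↑(Submodule.span ℝ
      {f : E n → ℝ | ∃ g ∈ NN φ n (l+1), ∃ b : ℝ, f = fun x => φ (g x + b)})

/-- `N^∞_φ(ℝⁿ) = ⋃_{l ≥ 1} N^l_φ(ℝⁿ)`. -/
def NNinf (φ : ℝ → ℝ) (n : ℕ) : Set (E n → ℝ) :=
  {f | ∃ l : ℕ, 1 ≤ l ∧ f ∈ NN φ n l}

/-- `C₀(ℝⁿ)`: continuous real-valued functions on `ℝⁿ` vanishing at infinity. -/
def C0 (n : ℕ) : Set (E n → ℝ) :=
  {f | Continuous f ∧ Tendsto f (cocompact (E n)) (𝓝 0)}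

/-!
Test a function `h` by the alternating sum `h(rv) - h(rw) + h(-rv) - h(-rw)` over the
vertices of the square spanned by `v = x + s y`, `w = y - s x` (`x, y` orthonormal), as
`r → ∞`. For a ridge function `φ(⟪a, ·⟫ + b)` each pair `h(rv) + h(-rv)` tends to `L₁ + L₂`
when `⟪a, v⟫ ≠ 0` and equals `2 φ(b)` otherwise, so the test tends to `0` for all but finitely
many `s`; by linearity the same holds for every one-layer network, and some `s > 0` works for
all of its finitely many ridges at once. For the two-layer network
`φ(t φ(⟪x, ·⟫) + t φ(⟪y, ·⟫) + b)` the limit is the second difference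
`φ(c) - 2 φ(c - h) + φ(c - 2h)` with `c = 2tL₂ + b`, `h = t(L₂ - L₁)`; it tends to
`φ(c) - L₁` as `h → ∞`, so it is nonzero for suitable `t, b`. Rescaling the network makes the
limit exceed `4d`, whereas a uniform approximation within `d` bounds every test by `4d`.
-/

open RealInnerProductSpace

namespace DepthSeparation

section AltSum

variable {X : Type*} [Neg X]

def altSum (v w : X) : (X → ℝ) →ₗ[ℝ] ℝ :=
  LinearMap.proj (R := ℝ) (φ := fun _ : X => ℝ) v - LinearMap.proj w + LinearMap.proj (-v)
    - LinearMap.proj (-w)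

lemma altSum_apply (v w : X) (h : X → ℝ) : altSum v w h = h v - h w + h (-v) - h (-w) := rfl

lemma abs_altSum_le {h : X → ℝ} {d : ℝ} (hd : ∀ z, |h z| ≤ d) (v w : X) :
    |altSum v w h| ≤ 4 * d := by
  have := abs_le.mp (hd v); have := abs_le.mp (hd w)
  have := abs_le.mp (hd (-v)); have := abs_le.mp (hd (-w))
  rw [altSum_apply, abs_le]
  constructor <;> linarith

lemma exists_le_abs_of_tendsto_altSum {ι : Type*} {l : Filter ι} [l.NeBot] {v w : ι → X}
    {h : X → ℝ} {ℓ d : ℝ} (hlim : Tendsto (fun i => altSum (v i) (w i) h) l (𝓝 ℓ))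
    (hℓ : 4 * d < |ℓ|) : ∃ z, d ≤ |h z| := by
  by_contra! hlt
  have hbound : ∀ i, |altSum (v i) (w i) h| ≤ 4 * d :=
    fun i => abs_altSum_le (fun z => (hlt z).le) _ _
  exact hℓ.not_ge (le_of_tendsto' hlim.abs hbound)

end AltSum

variable {V : Type*} [NormedAddCommGroup V] [InnerProductSpace ℝ V] {φ : ℝ → ℝ} {L₁ L₂ : ℝ}

lemma tendsto_comp_mul_add_of_pos (h₂ : Tendsto φ atTop (𝓝 L₂)) {u : ℝ} (hu : 0 < u)
    (b : ℝ) : Tendsto (fun r => φ (r * u + b)) atTop (𝓝 L₂) :=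
  h₂.comp (tendsto_atTop_add_const_right _ b (tendsto_id.atTop_mul_const hu))

lemma tendsto_comp_mul_add_of_neg (h₁ : Tendsto φ atBot (𝓝 L₁)) {u : ℝ} (hu : u < 0)
    (b : ℝ) : Tendsto (fun r => φ (r * u + b)) atTop (𝓝 L₁) :=
  h₁.comp (tendsto_atBot_add_const_right _ b (tendsto_id.atTop_mul_const_of_neg hu))

lemma tendsto_comp_mul_add_add_comp_neg (h₁ : Tendsto φ atBot (𝓝 L₁))
    (h₂ : Tendsto φ atTop (𝓝 L₂)) {u : ℝ} (hu : u ≠ 0) (b : ℝ) :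
    Tendsto (fun r => φ (r * u + b) + φ (-(r * u) + b)) atTop (𝓝 (L₁ + L₂)) := by
  simp_rw [← mul_neg]
  rcases hu.lt_or_gt with hneg | hpos
  · exact (tendsto_comp_mul_add_of_neg h₁ hneg b).add
      (tendsto_comp_mul_add_of_pos h₂ (neg_pos.mpr hneg) b)
  · rw [add_comm L₁]
    exact (tendsto_comp_mul_add_of_pos h₂ hpos b).add
      (tendsto_comp_mul_add_of_neg h₁ (neg_neg_iff_pos.mpr hpos) b)

lemma tendsto_altSum_ridge (h₁ : Tendsto φ atBot (𝓝 L₁)) (h₂ : Tendsto φ atTop (𝓝 L₂))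
    {a v w : V} (b : ℝ) (hvw : ⟪a, v⟫ = 0 ↔ ⟪a, w⟫ = 0) :
    Tendsto (fun r : ℝ => altSum (r • v) (r • w) (fun z => φ (⟪a, z⟫ + b))) atTop (𝓝 0) := by
  simp only [altSum_apply, inner_neg_right, real_inner_smul_right]
  by_cases hv : ⟪a, v⟫ = 0
  · simp [hv, hvw.mp hv]
  have hw : ⟪a, w⟫ ≠ 0 := fun hw => hv (hvw.mpr hw)
  have := (tendsto_comp_mul_add_add_comp_neg h₁ h₂ hv b).sub
    (tendsto_comp_mul_add_add_comp_neg h₁ h₂ hw b)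
  rw [sub_self] at this
  exact this.congr fun r => by ring

lemma eventually_cofinite_inner_eq_zero_iff (x y a : V) :
    ∀ᶠ s : ℝ in cofinite, (⟪a, x + s • y⟫ = 0 ↔ ⟪a, y - s • x⟫ = 0) := by
  simp only [inner_add_right, inner_sub_right, real_inner_smul_right]
  set p := ⟪a, x⟫
  set q := ⟪a, y⟫
  by_cases hpq : p = 0 ∧ q = 0
  · simp [hpq.1, hpq.2]
  filter_upwards [(Set.toFinite {-p / q, q / p}).eventually_cofinite_notMem] with s hs
  simp only [Set.mem_insert_iff, Set.mem_singleton_iff, not_or] at hs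
  have hv : p + s * q ≠ 0 := by
    intro h
    by_cases hq : q = 0
    · exact hpq ⟨by simpa [hq] using h, hq⟩
    · exact hs.1 (by field_simp; linarith)
  have hw : q - s * p ≠ 0 := by
    intro h
    by_cases hp : p = 0
    · exact hpq ⟨hp, by simpa [hp] using h⟩
    · exact hs.2 (by field_simp; linarith)
  exact iff_of_false hv hw

lemma eventually_cofinite_tendsto_altSum_of_mem_span (h₁ : Tendsto φ atBot (𝓝 L₁))
    (h₂ : Tendsto φ atTop (𝓝 L₂)) (x y : V) {g : V → ℝ}
    (hg : g ∈ Submodule.span ℝ {f : V → ℝ | ∃ (a : V) (b : ℝ), f = fun z => φ (⟪a, z⟫ + b)}) :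
    ∀ᶠ s : ℝ in cofinite,
      Tendsto (fun r : ℝ => altSum (r • (x + s • y)) (r • (y - s • x)) g) atTop (𝓝 0) := by
  induction hg using Submodule.span_induction with
  | mem f hf =>
    obtain ⟨a, b, rfl⟩ := hf
    filter_upwards [eventually_cofinite_inner_eq_zero_iff x y a] with s hs
    exact tendsto_altSum_ridge h₁ h₂ b hs
  | zero => simp
  | add f g _ _ hf hg =>
    filter_upwards [hf, hg] with s hfs hgs
    simpa only [map_add, add_zero] using hfs.add hgs
  | smul c f _ hf =>
    filter_upwards [hf] with s hfs
    simpa only [map_smul, smul_eq_mul, mul_zero] using hfs.const_mul c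

lemma tendsto_twoLayer_smul (hφc : Continuous φ) {x y z : V} {A B : ℝ}
    (hA : Tendsto (fun r : ℝ => φ ⟪x, r • z⟫) atTop (𝓝 A))
    (hB : Tendsto (fun r : ℝ => φ ⟪y, r • z⟫) atTop (𝓝 B)) (t b : ℝ) :
    Tendsto (fun r : ℝ => φ (t * φ ⟪x, r • z⟫ + t * φ ⟪y, r • z⟫ + b)) atTop
      (𝓝 (φ (t * A + t * B + b))) :=
  (hφc.tendsto _).comp (((hA.const_mul t).add (hB.const_mul t)).add_const b)

/-- For `s > 0` the four vertices `±r(x + s y)`, `±r(y - s x)` lie in the four open quadrants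
of the `(x, y)`-plane, where the inner units tend to `(L₂, L₂)`, `(L₁, L₂)`, `(L₁, L₁)`,
`(L₂, L₁)`. -/
lemma tendsto_altSum_twoLayer (hφc : Continuous φ) (h₁ : Tendsto φ atBot (𝓝 L₁))
    (h₂ : Tendsto φ atTop (𝓝 L₂)) {x y : V} (hxy : Orthonormal ℝ ![x, y]) {s : ℝ} (hs : 0 < s)
    (t b : ℝ) :
    Tendsto (fun r : ℝ => altSum (r • (x + s • y)) (r • (y - s • x))
        (fun z => φ (t * φ ⟪x, z⟫ + t * φ ⟪y, z⟫ + b))) atTop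
      (𝓝 (φ (t * L₂ + t * L₂ + b) - φ (t * L₁ + t * L₂ + b)
        + φ (t * L₁ + t * L₁ + b) - φ (t * L₂ + t * L₁ + b))) := by
  have hinner := orthonormal_iff_ite.mp hxy
  have hxx : ⟪x, x⟫ = 1 := by simpa using hinner 0 0
  have hyy : ⟪y, y⟫ = 1 := by simpa using hinner 1 1
  have hxy' : ⟪x, y⟫ = 0 := by simpa using hinner 0 1
  have hyx : ⟪y, x⟫ = 0 := by simpa using hinner 1 0
  have hpos : ∀ {u}, 0 < u → Tendsto (fun r : ℝ => φ (r * u)) atTop (𝓝 L₂) := fun hu => by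
    simpa using tendsto_comp_mul_add_of_pos h₂ hu 0
  have hneg : ∀ {u}, u < 0 → Tendsto (fun r : ℝ => φ (r * u)) atTop (𝓝 L₁) := fun hu => by
    simpa using tendsto_comp_mul_add_of_neg h₁ hu 0
  simp only [altSum_apply, ← smul_neg]
  refine (((tendsto_twoLayer_smul hφc ?_ ?_ t b).sub (tendsto_twoLayer_smul hφc ?_ ?_ t b)).add
    (tendsto_twoLayer_smul hφc ?_ ?_ t b)).sub (tendsto_twoLayer_smul hφc ?_ ?_ t b)
  all_goals simp only [real_inner_smul_right, inner_add_right, inner_sub_right, inner_neg_right,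
    hxx, hyy, hxy', hyx]
  · simpa using hpos one_pos
  · simpa using hpos hs
  · simpa using hneg (neg_neg_iff_pos.mpr hs)
  · simpa using hpos one_pos
  · simpa using hneg neg_one_lt_zero
  · simpa using hneg (neg_neg_iff_pos.mpr hs)
  · simpa using hpos hs
  · simpa using hneg neg_one_lt_zero

lemma exists_sub_two_mul_add_ne_zero (h₁ : Tendsto φ atBot (𝓝 L₁)) {c : ℝ} (hc : φ c ≠ L₁) :
    ∃ h : ℝ, φ c - 2 * φ (c - h) + φ (c - 2 * h) ≠ 0 := by
  have hlim : Tendsto (fun h => φ c - 2 * φ (c - h) + φ (c - 2 * h)) atTop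
      (𝓝 (φ c - 2 * L₁ + L₁)) := by
    refine (tendsto_const_nhds.sub ((h₁.comp ?_).const_mul 2)).add (h₁.comp ?_)
    · exact tendsto_atBot_add_const_left _ c tendsto_neg_atTop_atBot
    · exact tendsto_atBot_add_const_left _ c
        (tendsto_neg_atTop_atBot.comp (tendsto_id.const_mul_atTop two_pos))
  have hne : φ c - 2 * L₁ + L₁ ≠ 0 := by
    rw [show φ c - 2 * L₁ + L₁ = φ c - L₁ by ring]
    exact sub_ne_zero.mpr hc
  exact (hlim.eventually_ne hne).exists

lemma exists_twoLayer_limit_ne_zero (h₁ : Tendsto φ atBot (𝓝 L₁))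
    (h₂ : Tendsto φ atTop (𝓝 L₂)) (hne : L₁ ≠ L₂) :
    ∃ t b : ℝ, φ (t * L₂ + t * L₂ + b) - φ (t * L₁ + t * L₂ + b)
      + φ (t * L₁ + t * L₁ + b) - φ (t * L₂ + t * L₁ + b) ≠ 0 := by
  obtain ⟨c, hc⟩ := (h₂.eventually_ne hne.symm).exists
  obtain ⟨h, hh⟩ := exists_sub_two_mul_add_ne_zero h₁ hc
  have hD : L₂ - L₁ ≠ 0 := sub_ne_zero.mpr hne.symm
  set t := h / (L₂ - L₁)
  refine ⟨t, c - 2 * t * L₂, ?_⟩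
  have ht : t * (L₂ - L₁) = h := div_mul_cancel₀ h hD
  rw [show t * L₂ + t * L₂ + (c - 2 * t * L₂) = c by ring,
    show t * L₁ + t * L₂ + (c - 2 * t * L₂) = c - h by linear_combination -ht,
    show t * L₁ + t * L₁ + (c - 2 * t * L₂) = c - 2 * h by linear_combination -2 * ht,
    show t * L₂ + t * L₁ + (c - 2 * t * L₂) = c - h by linear_combination -ht]
  convert hh using 1
  ring

lemma exists_orthonormal_pair {n : ℕ} (hn : 2 ≤ n) : ∃ x y : E n, Orthonormal ℝ ![x, y] := by
  refine ⟨EuclideanSpace.single ⟨0, by omega⟩ 1, EuclideanSpace.single ⟨1, by omega⟩ 1, ?_⟩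
  rw [orthonormal_iff_ite]
  intro i j
  fin_cases i <;> fin_cases j <;> simp [EuclideanSpace.inner_single_left]

lemma twoLayer_mem_NN {n : ℕ} (x y : E n) (t b : ℝ) :
    (fun z => φ (t * φ ⟪x, z⟫ + t * φ ⟪y, z⟫ + b)) ∈ NN φ n 2 := by
  have ridge_mem (a : E n) : (fun z => φ ⟪a, z⟫) ∈ NN φ n 1 :=
    Submodule.subset_span ⟨a, 0, by simp⟩
  exact Submodule.subset_span ⟨_, Submodule.add_mem _ (Submodule.smul_mem _ t (ridge_mem x))
    (Submodule.smul_mem _ t (ridge_mem y)), b, rfl⟩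

end DepthSeparation

open DepthSeparation in
/-- If `φ` is continuous with distinct finite limits at `±∞` and `n ≥ 2`, then
for every `d > 0` there is a two-layer network whose uniform distance to every
one-layer network is at least `d`. -/
theorem stmt3 (n : ℕ) (hn : 2 ≤ n) (φ : ℝ → ℝ) (hφc : Continuous φ)
    (L₁ L₂ : ℝ) (h₁ : Tendsto φ atBot (𝓝 L₁)) (h₂ : Tendsto φ atTop (𝓝 L₂))
    (hne : L₁ ≠ L₂) :
    ∀ d : ℝ, 0 < d → ∃ f ∈ NN φ n 2, ∀ g ∈ NN φ n 1,
      ENNReal.ofReal d ≤ ⨆ x : E n, ENNReal.ofReal |f x - g x| := by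
  intro d hd
  obtain ⟨x, y, hxy⟩ := exists_orthonormal_pair hn
  obtain ⟨t, b, hℓ⟩ := exists_twoLayer_limit_ne_zero h₁ h₂ hne
  set ℓ := φ (t * L₂ + t * L₂ + b) - φ (t * L₁ + t * L₂ + b)
    + φ (t * L₁ + t * L₁ + b) - φ (t * L₂ + t * L₁ + b)
  set f : E n → ℝ := fun z => φ (t * φ ⟪x, z⟫ + t * φ ⟪y, z⟫ + b)
  set K := 5 * d / |ℓ|
  refine ⟨K • f, Submodule.smul_mem _ K (twoLayer_mem_NN x y t b), fun g hg => ?_⟩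
  obtain ⟨s, hgs, hs⟩ :=
    ((eventually_cofinite_tendsto_altSum_of_mem_span h₁ h₂ x y hg).and_frequently
      (frequently_cofinite_iff_infinite.mpr (Set.Ioi_infinite 0))).exists
  have hlim : Tendsto (fun r : ℝ => altSum (r • (x + s • y)) (r • (y - s • x)) (K • f - g))
      atTop (𝓝 (K * ℓ - 0)) := by
    simpa only [map_sub, map_smul, smul_eq_mul] using
      ((tendsto_altSum_twoLayer hφc h₁ h₂ hxy hs t b).const_mul K).sub hgs
  have hKℓ : 4 * d < |K * ℓ - 0| := by
    rw [sub_zero, abs_mul, abs_of_pos (by positivity), div_mul_cancel₀ _ (abs_pos.mpr hℓ).ne']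
    linarith
  obtain ⟨z, hz⟩ := exists_le_abs_of_tendsto_altSum hlim hKℓ
  exact le_iSup_of_le z (ENNReal.ofReal_le_ofReal hz)
end
end

section
/- Let n ∈ ℕ and let φ : ℝ → ℝ be continuous and such that lim_{x→−∞} φ(x) and lim_{x→∞} φ(x) exist and are finite. Then the sup-norm closure of N^∞_φ(ℝⁿ) is an algebra under pointwise operations; in particular, if f and g both lie in the sup-norm closure of N^∞_φ(ℝⁿ), then so does the pointwise product x ↦ f(x)·g(x). -/
open Filter Topology MeasureTheory

noncomputable section

/-!
Since `φ` is bounded, so is every network. If `φ` is constant, all networks are constants and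
there is nothing to prove. Otherwise a mollification `ψ = ρ ⋆ φ` is smooth, bounded and not
constant, and its Riemann sums show that `ψ` is a locally uniform limit of combinations
`s ↦ ∑ cᵢ φ (aᵢ s + bᵢ)`. Differentiating `ψ (a s + b)` in `a` at `a = 0`, once and twice, gives
the same for `s ↦ s ψ' b` and `s ↦ s² ψ'' b`, and `b` can be chosen with `ψ' b ≠ 0`,
`ψ'' b ≠ 0` (a bounded function with `ψ'' = 0` is constant). So `s ↦ s` and `s ↦ s²` can be
approximated on bounded sets by one-layer combinations. Composing a network with the first lifts
it, up to a small uniform error, to the next depth, so networks of different depths can be added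
within a common depth; composing with the second and polarizing,
`F G = ((F + G)² - F² - G²) / 2`, approximates products of networks.
-/

open Set Metric
open scoped Convolution ContDiff

section LocalApproximation

def ridgeSpan (φ : ℝ → ℝ) : Submodule ℝ (ℝ → ℝ) :=
  Submodule.span ℝ {f | ∃ a b : ℝ, f = fun s => φ (a * s + b)}

theorem comp_affine_mem_ridgeSpan {φ g : ℝ → ℝ} (hg : g ∈ ridgeSpan φ) (a b : ℝ) :
    (fun s => g (a * s + b)) ∈ ridgeSpan φ := by
  induction hg using Submodule.span_induction with
  | mem f hf =>
    obtain ⟨c, d, rfl⟩ := hf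
    exact Submodule.subset_span ⟨c * a, c * b + d, by ext s; ring_nf⟩
  | zero => exact Submodule.zero_mem _
  | add f g _ _ hf hg => exact Submodule.add_mem _ hf hg
  | smul c f _ hf => exact Submodule.smul_mem _ c hf

def locUnifClosure (S : Submodule ℝ (ℝ → ℝ)) : Submodule ℝ (ℝ → ℝ) where
  carrier := {ψ | ∀ M > 0, ∀ ε > 0, ∃ g ∈ S, ∀ s, |s| ≤ M → |ψ s - g s| ≤ ε}
  zero_mem' M _ ε hε := ⟨0, S.zero_mem, fun s _ => by simpa using hε.le⟩
  add_mem' {f g} hf hg M hM ε hε := by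
    obtain ⟨F, hF, hfF⟩ := hf M hM (ε / 2) (by positivity)
    obtain ⟨G, hG, hgG⟩ := hg M hM (ε / 2) (by positivity)
    refine ⟨F + G, S.add_mem hF hG, fun s hs => ?_⟩
    calc |(f + g) s - (F + G) s| = |(f s - F s) + (g s - G s)| := by
          simp only [Pi.add_apply]; ring_nf
      _ ≤ |f s - F s| + |g s - G s| := abs_add_le _ _
      _ ≤ ε := by linarith [hfF s hs, hgG s hs]
  smul_mem' c f hf M hM ε hε := by
    obtain ⟨F, hF, hfF⟩ := hf M hM (ε / (|c| + 1)) (by positivity)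
    refine ⟨c • F, S.smul_mem c hF, fun s hs => ?_⟩
    calc |(c • f) s - (c • F) s| = |c| * |f s - F s| := by
          simp only [Pi.smul_apply, smul_eq_mul, ← mul_sub, abs_mul]
      _ ≤ (|c| + 1) * (ε / (|c| + 1)) := by gcongr; exacts [by linarith, hfF s hs]
      _ = ε := by field_simp

theorem mem_locUnifClosure_of_forall {S : Submodule ℝ (ℝ → ℝ)} {ψ : ℝ → ℝ}
    (h : ∀ M > 0, ∀ ε > 0, ∃ g ∈ locUnifClosure S, ∀ s, |s| ≤ M → |ψ s - g s| ≤ ε) :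
    ψ ∈ locUnifClosure S := by
  intro M hM ε hε
  obtain ⟨g, hg, hψg⟩ := h M hM (ε / 2) (by positivity)
  obtain ⟨G, hG, hgG⟩ := hg M hM (ε / 2) (by positivity)
  exact ⟨G, hG, fun s hs => by linarith [abs_sub_le (ψ s) (g s) (G s), hψg s hs, hgG s hs]⟩

theorem abs_mul_add_le {a b s K M : ℝ} (ha : |a| ≤ K) (hs : |s| ≤ M) :
    |a * s + b| ≤ K * M + |b| :=
  calc |a * s + b| ≤ |a| * |s| + |b| := by rw [← abs_mul]; exact abs_add_le _ _
    _ ≤ K * M + |b| := by gcongr; exact (abs_nonneg a).trans ha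

theorem comp_affine_mem_locUnifClosure_ridgeSpan {φ ψ : ℝ → ℝ}
    (hψ : ψ ∈ locUnifClosure (ridgeSpan φ)) (a b : ℝ) :
    (fun s => ψ (a * s + b)) ∈ locUnifClosure (ridgeSpan φ) := by
  intro M hM ε hε
  obtain ⟨g, hg, hψg⟩ := hψ (|a| * M + |b| + 1) (by positivity) ε hε
  exact ⟨_, comp_affine_mem_ridgeSpan hg a b,
    fun s hs => hψg _ (by linarith [abs_mul_add_le (a := a) (b := b) le_rfl hs])⟩

end LocalApproximation

section Mollification

theorem abs_intervalIntegral_sub_riemannSum_le {h : ℝ → ℝ} (hh : Continuous h) {a b η : ℝ}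
    (hab : a ≤ b) {N : ℕ} (hN : 0 < N)
    (hmod : ∀ t ∈ Icc a b, ∀ u ∈ Icc a b, |t - u| ≤ (b - a) / N → |h t - h u| ≤ η) :
    |(∫ t in a..b, h t) - ∑ k ∈ Finset.range N, (b - a) / N * h (a + k * ((b - a) / N))|
      ≤ (b - a) * η := by
  set δ := (b - a) / N with hδ
  set node : ℕ → ℝ := fun k => a + k * δ
  have hδ0 : 0 ≤ δ := by positivity
  have hnode_succ (k : ℕ) : node (k + 1) = node k + δ := by simp only [node]; push_cast; ring
  have hnode_mem {k : ℕ} (hk : k ≤ N) : node k ∈ Icc a b := by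
    have : (k : ℝ) * δ ≤ N * δ := by gcongr
    have hNδ : (N : ℝ) * δ = b - a := by rw [hδ]; field_simp
    exact ⟨by simp only [node]; nlinarith [k.cast_nonneg (α := ℝ)], by simp only [node]; linarith⟩
  have hsplit : ∫ t in a..b, h t = ∑ k ∈ Finset.range N, ∫ t in node k..node (k + 1), h t := by
    have h0 : node 0 = a := by simp [node]
    have hN' : node N = b := by simp only [node, hδ]; field_simp; ring
    rw [intervalIntegral.sum_integral_adjacent_intervals fun k _ => hh.intervalIntegrable _ _,
      h0, hN']
  have hpiece (k : ℕ) (hk : k < N) :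
      |(∫ t in node k..node (k + 1), h t) - δ * h (node k)| ≤ δ * η := by
    have hconst : δ * h (node k) = ∫ _ in node k..node (k + 1), h (node k) := by
      rw [intervalIntegral.integral_const, hnode_succ, smul_eq_mul]; ring_nf
    rw [hconst, ← intervalIntegral.integral_sub (hh.intervalIntegrable _ _)
      intervalIntegrable_const]
    have hbound : ∀ t ∈ uIoc (node k) (node (k + 1)), ‖h t - h (node k)‖ ≤ η := by
      intro t ht
      rw [uIoc_of_le (by rw [hnode_succ]; linarith), hnode_succ] at ht
      have hk₁ := hnode_mem hk.le
      have hk₂ := hnode_mem (Nat.succ_le_of_lt hk)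
      rw [hnode_succ] at hk₂
      exact hmod t ⟨by linarith [ht.1, hk₁.1], by linarith [ht.2, hk₂.2]⟩ _ hk₁
        (by rw [abs_of_nonneg (by linarith [ht.1])]; linarith [ht.2])
    calc _ ≤ η * |node (k + 1) - node k| :=
          intervalIntegral.norm_integral_le_of_norm_le_const hbound
      _ = δ * η := by rw [hnode_succ, add_sub_cancel_left, abs_of_nonneg hδ0, mul_comm]
  calc _ = |∑ k ∈ Finset.range N, ((∫ t in node k..node (k + 1), h t) - δ * h (node k))| := by
        rw [hsplit, Finset.sum_sub_distrib]
    _ ≤ ∑ k ∈ Finset.range N, δ * η :=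
        (Finset.abs_sum_le_sum_abs _ _).trans
          (Finset.sum_le_sum fun k hk => hpiece k (Finset.mem_range.mp hk))
    _ = (b - a) * η := by rw [Finset.sum_const, Finset.card_range, nsmul_eq_mul, hδ]; field_simp

theorem convolution_mem_locUnifClosure_ridgeSpan {φ : ℝ → ℝ} (hφ : Continuous φ)
    (ρ : ContDiffBump (0 : ℝ)) :
    ρ.normed volume ⋆[ContinuousLinearMap.lsmul ℝ ℝ] φ ∈ locUnifClosure (ridgeSpan φ) := by
  set r := ρ.rOut
  have hr : 0 < r := ρ.rOut_pos
  set K : ℝ × ℝ → ℝ := fun p => ρ.normed volume p.2 * φ (p.1 - p.2)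
  have hK : Continuous K := by unfold K; have := ρ.continuous_normed (μ := volume); fun_prop
  have hconv (x : ℝ) :
      (ρ.normed volume ⋆[ContinuousLinearMap.lsmul ℝ ℝ] φ) x = ∫ t in -r..r, K (x, t) := by
    rw [convolution_def, intervalIntegral.integral_of_le (by linarith),
      ← integral_Icc_eq_integral_Ioc, setIntegral_eq_integral_of_forall_compl_eq_zero]
    · rfl
    · intro t ht
      have : ρ.normed volume t = 0 := by
        rw [← Function.notMem_support, ρ.support_normed_eq, mem_ball_zero_iff, Real.norm_eq_abs]
        exact fun h => ht (abs_le.mp h.le)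
      simp [K, this]
  intro M hM ε hε
  obtain ⟨δ, hδ, hKδ⟩ := Metric.uniformContinuousOn_iff_le.mp
    ((isCompact_Icc.prod isCompact_Icc).uniformContinuousOn_of_continuous
      (s := Icc (-M) M ×ˢ Icc (-r) r) hK.continuousOn) (ε / (2 * r)) (by positivity)
  obtain ⟨N, hN⟩ := exists_nat_gt (2 * r / δ)
  have hN0 : 0 < N := by exact_mod_cast (by positivity : 0 < 2 * r / δ).trans hN
  refine ⟨fun x => ∑ k ∈ Finset.range N,
    (r - -r) / N * K (x, -r + k * ((r - -r) / N)), ?_, fun x hx => ?_⟩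
  · have : (fun x => ∑ k ∈ Finset.range N, (r - -r) / N * K (x, -r + k * ((r - -r) / N))) =
        ∑ k ∈ Finset.range N, ((r - -r) / N * ρ.normed volume (-r + k * ((r - -r) / N))) •
          fun s => φ (1 * s + -(-r + k * ((r - -r) / N))) := by
      ext x; simp [K, Finset.sum_apply, sub_eq_add_neg, mul_assoc]
    rw [this]
    exact Submodule.sum_mem _ fun k _ => Submodule.smul_mem _ _ (Submodule.subset_span ⟨_, _, rfl⟩)
  · have hstep : (r - -r) / N ≤ δ := by
      rw [div_le_iff₀ (by positivity)]
      rw [div_lt_iff₀ hδ] at hN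
      linarith
    rw [hconv]
    calc _ ≤ (r - -r) * (ε / (2 * r)) :=
          abs_intervalIntegral_sub_riemannSum_le (h := fun t => K (x, t)) (by fun_prop)
            (by linarith) hN0 fun t ht u hu htu => by
              have := hKδ (x, t) ⟨abs_le.mp hx, ht⟩ (x, u) ⟨abs_le.mp hx, hu⟩
                (by rw [Prod.dist_eq, dist_self, Real.dist_eq]
                    exact max_le hδ.le (htu.trans hstep))
              rwa [Real.dist_eq] at this
      _ = ε := by field_simp; ring

end Mollification

section DifferenceQuotients

theorem exists_abs_sub_sub_deriv_mul_le {ψ ψ' : ℝ → ℝ} (hψ : ∀ x, HasDerivAt ψ (ψ' x) x)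
    (hψ' : Continuous ψ') (A : ℝ) {ε : ℝ} (hε : 0 < ε) :
    ∃ δ > 0, ∀ x y, |x| ≤ A → |y| ≤ A → |y - x| ≤ δ →
      |ψ y - ψ x - ψ' x * (y - x)| ≤ ε * |y - x| := by
  obtain ⟨δ, hδ, hψ'δ⟩ := Metric.uniformContinuousOn_iff_le.mp
    (isCompact_Icc.uniformContinuousOn_of_continuous (s := Icc (-A) A) hψ'.continuousOn) ε hε
  refine ⟨δ, hδ, fun x y hx hy hxy => ?_⟩
  have hseg : uIcc x y ⊆ Icc (-A) A := uIcc_subset_Icc (abs_le.mp hx) (abs_le.mp hy)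
  have key := Convex.norm_image_sub_le_of_norm_hasDerivWithin_le
    (f := fun t => ψ t - ψ' x * t) (f' := fun t => ψ' t - ψ' x)
    (fun t _ => ((hψ t).sub ((hasDerivAt_id t).const_mul (ψ' x))).hasDerivWithinAt.congr_deriv
      (by simp))
    (fun t ht => by
      simpa [Real.dist_eq] using hψ'δ t (hseg ht) x (hseg left_mem_uIcc)
        ((abs_sub_left_of_mem_uIcc ht).trans hxy))
    (convex_uIcc x y) left_mem_uIcc right_mem_uIcc
  simp only [Real.norm_eq_abs] at key
  convert key using 2; ring

variable {S : Submodule ℝ (ℝ → ℝ)}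

/-- The difference quotients of `λ ↦ s ^ j * ψ (λ * s + b)` in the dilation parameter `λ`
converge to `s ^ (j + 1) * ψ' (λ * s + b)` uniformly for `s` in bounded intervals. -/
theorem pow_succ_mul_deriv_comp_mem_locUnifClosure {ψ ψ' : ℝ → ℝ}
    (hψ : ∀ x, HasDerivAt ψ (ψ' x) x) (hψ' : Continuous ψ') {j : ℕ}
    (hS : ∀ a b, (fun s => s ^ j * ψ (a * s + b)) ∈ locUnifClosure S) (a b : ℝ) :
    (fun s => s ^ (j + 1) * ψ' (a * s + b)) ∈ locUnifClosure S := by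
  refine mem_locUnifClosure_of_forall fun M hM ε hε => ?_
  obtain ⟨δ, hδ, hψδ⟩ := exists_abs_sub_sub_deriv_mul_le hψ hψ' ((|a| + 1) * M + |b|)
    (by positivity : 0 < ε / M ^ (j + 1))
  set η := min 1 (δ / M)
  have hη : 0 < η := lt_min one_pos (by positivity)
  refine ⟨η⁻¹ • ((fun s => s ^ j * ψ ((a + η) * s + b)) - fun s => s ^ j * ψ (a * s + b)),
    Submodule.smul_mem _ _ (Submodule.sub_mem _ (hS _ _) (hS _ _)), fun s hs => ?_⟩
  have hx := abs_mul_add_le (b := b) (by linarith : |a| ≤ |a| + 1) hs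
  have hy := abs_mul_add_le (a := a + η) (K := |a| + 1) (b := b)
    ((abs_add_le a η).trans (by rw [abs_of_pos hη]; linarith [min_le_left 1 (δ / M)])) hs
  have hyx : (a + η) * s + b - (a * s + b) = η * s := by ring
  have hηs : |η * s| ≤ δ := by
    rw [abs_mul, abs_of_pos hη]
    calc η * |s| ≤ δ / M * M := by gcongr; exact min_le_right _ _
      _ = δ := by field_simp
  have := hψδ _ _ hx hy (by rwa [hyx])
  rw [hyx] at this
  calc |s ^ (j + 1) * ψ' (a * s + b) -
        η⁻¹ * (s ^ j * ψ ((a + η) * s + b) - s ^ j * ψ (a * s + b))|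
      = |s ^ j * η⁻¹ * (ψ ((a + η) * s + b) - ψ (a * s + b) - ψ' (a * s + b) * (η * s))| := by
        rw [← abs_neg]; congr 1; field_simp; ring
    _ = |s| ^ j * η⁻¹ * |ψ ((a + η) * s + b) - ψ (a * s + b) - ψ' (a * s + b) * (η * s)| := by
        rw [abs_mul, abs_mul, abs_pow, abs_of_pos (inv_pos.mpr hη)]
    _ ≤ |s| ^ j * η⁻¹ * (ε / M ^ (j + 1) * |η * s|) := by gcongr
    _ = ε / M ^ (j + 1) * |s| ^ (j + 1) := by
        rw [abs_mul, abs_of_pos hη]; field_simp; ring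
    _ ≤ ε / M ^ (j + 1) * M ^ (j + 1) := by gcongr
    _ = ε := by field_simp

end DifferenceQuotients

section Monomials

theorem pow_mul_iteratedDeriv_comp_mem_locUnifClosure {S : Submodule ℝ (ℝ → ℝ)} {ψ : ℝ → ℝ}
    (hψ : ContDiff ℝ ∞ ψ) (hS : ∀ a b, (fun s => ψ (a * s + b)) ∈ locUnifClosure S) (j : ℕ)
    (a b : ℝ) : (fun s => s ^ j * iteratedDeriv j ψ (a * s + b)) ∈ locUnifClosure S := by
  induction j generalizing a b with
  | zero => simpa using hS a b
  | succ j ih =>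
    rw [iteratedDeriv_succ]
    exact pow_succ_mul_deriv_comp_mem_locUnifClosure
      (fun x => (hψ.differentiable_iteratedDeriv j
        (by exact_mod_cast WithTop.coe_lt_top _) x).hasDerivAt)
      (iteratedDeriv_succ (f := ψ) ▸ hψ.continuous_iteratedDeriv (j + 1) ENat.LEInfty.out)
      ih a b

theorem pow_mem_locUnifClosure {S : Submodule ℝ (ℝ → ℝ)} {ψ : ℝ → ℝ} (hψ : ContDiff ℝ ∞ ψ)
    (hS : ∀ a b, (fun s => ψ (a * s + b)) ∈ locUnifClosure S) {j : ℕ} {b : ℝ}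
    (hb : iteratedDeriv j ψ b ≠ 0) : (fun s => s ^ j) ∈ locUnifClosure S := by
  have := Submodule.smul_mem _ (iteratedDeriv j ψ b)⁻¹
    (pow_mul_iteratedDeriv_comp_mem_locUnifClosure hψ hS j 0 b)
  convert this using 1
  ext s; simp; field_simp

theorem exists_deriv_ne_zero {ψ : ℝ → ℝ} (hψ : Differentiable ℝ ψ) {u v : ℝ} (huv : ψ u ≠ ψ v) :
    ∃ b, deriv ψ b ≠ 0 := by
  by_contra! h
  exact huv (is_const_of_deriv_eq_zero hψ h u v)

theorem exists_iteratedDeriv_two_ne_zero {ψ : ℝ → ℝ} (hψ : ContDiff ℝ 2 ψ) {C : ℝ}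
    (hC : ∀ x, |ψ x| ≤ C) {u v : ℝ} (huv : ψ u ≠ ψ v) : ∃ b, iteratedDeriv 2 ψ b ≠ 0 := by
  by_contra! h
  have hψ' : Differentiable ℝ (deriv ψ) := by
    simpa using hψ.differentiable_iteratedDeriv 1 (by norm_num)
  obtain ⟨b, hb⟩ := exists_deriv_ne_zero (hψ.differentiable (by norm_num)) huv
  have hconst (x : ℝ) : deriv ψ x = deriv ψ b :=
    is_const_of_deriv_eq_zero hψ' (fun x => by simpa [iteratedDeriv_succ] using h x) x b
  have haffine (x : ℝ) : ψ x = ψ 0 + deriv ψ b * x := by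
    have hg : ∀ z, HasDerivAt (fun w => ψ w - deriv ψ b * w) 0 z := fun z => by
      have := ((hψ.differentiable (by norm_num) z).hasDerivAt).sub
        ((hasDerivAt_id' z).const_mul (deriv ψ b))
      rwa [hconst z, mul_one, sub_self] at this
    have := is_const_of_deriv_eq_zero (fun z => (hg z).differentiableAt) (fun z => (hg z).deriv) x 0
    simp only [mul_zero, sub_zero] at this
    linarith
  have h1 := hC ((2 * C + 1) / deriv ψ b)
  have h0 := hC 0
  rw [haffine, mul_div_cancel₀ _ hb] at h1
  rw [abs_le] at h0 h1
  linarith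

theorem exists_contDiff_bounded_ne_mem_locUnifClosure_ridgeSpan {φ : ℝ → ℝ} (hφ : Continuous φ)
    {B : ℝ} (hB : ∀ x, |φ x| ≤ B) {u v : ℝ} (huv : φ u ≠ φ v) :
    ∃ ψ : ℝ → ℝ, ContDiff ℝ ∞ ψ ∧ (∀ x, |ψ x| ≤ 3 * B) ∧ ψ u ≠ ψ v ∧
      ψ ∈ locUnifClosure (ridgeSpan φ) := by
  set d := |φ u - φ v|
  have hd : 0 < d := abs_pos.mpr (sub_ne_zero.mpr huv)
  obtain ⟨r₁, hr₁, hu⟩ := Metric.continuous_iff.mp hφ u (d / 3) (by positivity)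
  obtain ⟨r₂, hr₂, hv⟩ := Metric.continuous_iff.mp hφ v (d / 3) (by positivity)
  set r := min r₁ r₂
  let ρ : ContDiffBump (0 : ℝ) := ⟨r / 2, r, by positivity, by linarith [lt_min hr₁ hr₂]⟩
  set ψ := ρ.normed volume ⋆[ContinuousLinearMap.lsmul ℝ ℝ] φ
  have hclose {x : ℝ} {η : ℝ} (h : ∀ y, dist y x < r → dist (φ y) (φ x) ≤ η) :
      dist (ψ x) (φ x) ≤ η :=
    ρ.dist_normed_convolution_le hφ.aestronglyMeasurable fun y hy => h y hy
  refine ⟨ψ, ρ.hasCompactSupport_normed.contDiff_convolution_left _ ρ.contDiff_normed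
    hφ.locallyIntegrable, fun x => ?_, fun heq => ?_,
    convolution_mem_locUnifClosure_ridgeSpan hφ ρ⟩
  · have := hclose (x := x) (η := 2 * B) fun y _ => by
      rw [Real.dist_eq]; linarith [abs_sub (φ y) (φ x), hB y, hB x]
    rw [Real.dist_eq] at this
    linarith [abs_sub_abs_le_abs_sub (ψ x) (φ x), hB x]
  · have h₁ := hclose (x := u) fun y hy => (hu y (hy.trans_le (min_le_left _ _))).le
    have h₂ := hclose (x := v) fun y hy => (hv y (hy.trans_le (min_le_right _ _))).le
    rw [heq] at h₁
    have := dist_triangle_left (φ u) (φ v) (ψ v)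
    rw [Real.dist_eq] at this
    linarith

theorem id_mem_locUnifClosure_ridgeSpan {φ : ℝ → ℝ} (hφ : Continuous φ) {B : ℝ}
    (hB : ∀ x, |φ x| ≤ B) {u v : ℝ} (huv : φ u ≠ φ v) :
    (fun s => s) ∈ locUnifClosure (ridgeSpan φ) := by
  obtain ⟨ψ, hψ, -, hψuv, hψφ⟩ := exists_contDiff_bounded_ne_mem_locUnifClosure_ridgeSpan hφ hB huv
  obtain ⟨b, hb⟩ := exists_deriv_ne_zero (hψ.differentiable (by simp)) hψuv
  simpa using pow_mem_locUnifClosure hψ (comp_affine_mem_locUnifClosure_ridgeSpan hψφ)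
    (j := 1) (b := b) (by simpa using hb)

theorem sq_mem_locUnifClosure_ridgeSpan {φ : ℝ → ℝ} (hφ : Continuous φ) {B : ℝ}
    (hB : ∀ x, |φ x| ≤ B) {u v : ℝ} (huv : φ u ≠ φ v) :
    (fun s => s ^ 2) ∈ locUnifClosure (ridgeSpan φ) := by
  obtain ⟨ψ, hψ, hψB, hψuv, hψφ⟩ :=
    exists_contDiff_bounded_ne_mem_locUnifClosure_ridgeSpan hφ hB huv
  obtain ⟨b, hb⟩ := exists_iteratedDeriv_two_ne_zero (hψ.of_le ENat.LEInfty.out) hψB hψuv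
  exact pow_mem_locUnifClosure hψ (comp_affine_mem_locUnifClosure_ridgeSpan hψφ) hb

end Monomials

section UniformClosure

variable {α : Type*} {S T : Set (α → ℝ)}

theorem subset_unifClosure : S ⊆ UnifClosure S :=
  fun f hf _ hε => ⟨f, hf, fun x => by simpa using hε.le⟩

theorem unifClosure_mono (h : S ⊆ T) : UnifClosure S ⊆ UnifClosure T :=
  fun _ hf ε hε => let ⟨g, hg, hfg⟩ := hf ε hε; ⟨g, h hg, hfg⟩

theorem unifClosure_unifClosure : UnifClosure (UnifClosure S) = UnifClosure S := by
  refine Subset.antisymm (fun f hf ε hε => ?_) subset_unifClosure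
  obtain ⟨g, hg, hfg⟩ := hf (ε / 2) (by positivity)
  obtain ⟨h, hh, hgh⟩ := hg (ε / 2) (by positivity)
  exact ⟨h, hh, fun x => by linarith [abs_sub_le (f x) (g x) (h x), hfg x, hgh x]⟩

theorem exists_bound_of_mem_unifClosure (hS : ∀ F ∈ S, ∃ C, ∀ x, |F x| ≤ C) {f : α → ℝ}
    (hf : f ∈ UnifClosure S) : ∃ C, ∀ x, |f x| ≤ C := by
  obtain ⟨F, hF, hfF⟩ := hf 1 one_pos
  obtain ⟨C, hC⟩ := hS F hF
  exact ⟨C + 1, fun x => by linarith [abs_sub_abs_le_abs_sub (f x) (F x), hfF x, hC x]⟩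

theorem add_mem_unifClosure (hST : ∀ F ∈ S, ∀ G ∈ S, F + G ∈ UnifClosure T) {f g : α → ℝ}
    (hf : f ∈ UnifClosure S) (hg : g ∈ UnifClosure S) :
    (fun x => f x + g x) ∈ UnifClosure T := by
  rw [← unifClosure_unifClosure]
  intro ε hε
  obtain ⟨F, hF, hfF⟩ := hf (ε / 2) (by positivity)
  obtain ⟨G, hG, hgG⟩ := hg (ε / 2) (by positivity)
  refine ⟨F + G, hST F hF G hG, fun x => ?_⟩
  calc |f x + g x - (F + G) x| = |(f x - F x) + (g x - G x)| := by simp only [Pi.add_apply]; ring_nf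
    _ ≤ ε := (abs_add_le _ _).trans (by linarith [hfF x, hgG x])

theorem const_mul_mem_unifClosure (c : ℝ) (hST : ∀ F ∈ S, c • F ∈ UnifClosure T)
    {f : α → ℝ} (hf : f ∈ UnifClosure S) : (fun x => c * f x) ∈ UnifClosure T := by
  rw [← unifClosure_unifClosure]
  intro ε hε
  obtain ⟨F, hF, hfF⟩ := hf (ε / (|c| + 1)) (by positivity)
  refine ⟨c • F, hST F hF, fun x => ?_⟩
  calc |c * f x - (c • F) x| = |c| * |f x - F x| := by
        rw [Pi.smul_apply, smul_eq_mul, ← mul_sub, abs_mul]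
    _ ≤ (|c| + 1) * (ε / (|c| + 1)) := by gcongr; exacts [by linarith, hfF x]
    _ = ε := by field_simp

theorem mul_mem_unifClosure (hST : ∀ F ∈ S, ∀ G ∈ S, (fun x => F x * G x) ∈ UnifClosure T)
    {f g : α → ℝ} (hf : f ∈ UnifClosure S) (hg : g ∈ UnifClosure S) {C₁ C₂ : ℝ}
    (hfC : ∀ x, |f x| ≤ C₁) (hgC : ∀ x, |g x| ≤ C₂) :
    (fun x => f x * g x) ∈ UnifClosure T := by
  rw [← unifClosure_unifClosure]
  intro ε hε
  set δ := min 1 (ε / (|C₁| + |C₂| + 1))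
  have hδ : 0 < δ := lt_min one_pos (by positivity)
  obtain ⟨F, hF, hfF⟩ := hf δ hδ
  obtain ⟨G, hG, hgG⟩ := hg δ hδ
  refine ⟨_, hST F hF G hG, fun x => ?_⟩
  have hGx : |G x| ≤ |C₂| + 1 := by
    linarith [abs_sub_abs_le_abs_sub (G x) (g x), abs_sub_comm (g x) (G x), hgG x, hgC x,
      le_abs_self C₂, min_le_left 1 (ε / (|C₁| + |C₂| + 1))]
  calc |f x * g x - F x * G x| = |f x * (g x - G x) + G x * (f x - F x)| := by ring_nf
    _ ≤ |f x| * |g x - G x| + |G x| * |f x - F x| := by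
        rw [← abs_mul, ← abs_mul]; exact abs_add_le _ _
    _ ≤ |C₁| * δ + (|C₂| + 1) * δ :=
        add_le_add
          (mul_le_mul ((hfC x).trans (le_abs_self _)) (hgG x) (abs_nonneg _) (abs_nonneg _))
          (mul_le_mul hGx (hfF x) (abs_nonneg _) (by positivity))
    _ = (|C₁| + |C₂| + 1) * δ := by ring
    _ ≤ (|C₁| + |C₂| + 1) * (ε / (|C₁| + |C₂| + 1)) := by gcongr; exact min_le_right _ _
    _ = ε := by field_simp

theorem exists_bound_of_mem_span (hS : ∀ F ∈ S, ∃ C, ∀ x, |F x| ≤ C) {f : α → ℝ}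
    (hf : f ∈ Submodule.span ℝ S) :
    ∃ C, ∀ x, |f x| ≤ C := by
  induction hf using Submodule.span_induction with
  | mem F hF => exact hS F hF
  | zero => exact ⟨0, fun x => by simp⟩
  | add F G _ _ hF hG =>
    obtain ⟨C₁, hC₁⟩ := hF
    obtain ⟨C₂, hC₂⟩ := hG
    exact ⟨C₁ + C₂, fun x => (abs_add_le _ _).trans (add_le_add (hC₁ x) (hC₂ x))⟩
  | smul c F _ hF =>
    obtain ⟨C, hC⟩ := hF
    exact ⟨|c| * C, fun x => by
      rw [Pi.smul_apply, smul_eq_mul, abs_mul]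
      exact mul_le_mul_of_nonneg_left (hC x) (abs_nonneg c)⟩

end UniformClosure

section Networks

variable {φ : ℝ → ℝ} {n : ℕ} {B : ℝ}

theorem exists_submodule_eq_NN {l : ℕ} (hl : 1 ≤ l) :
    ∃ p : Submodule ℝ (E n → ℝ), NN φ n l = p := by
  obtain ⟨m, rfl⟩ : ∃ m, l = m + 1 := ⟨l - 1, by omega⟩
  cases m <;> exact ⟨_, rfl⟩

theorem zero_mem_NN (l : ℕ) : (0 : E n → ℝ) ∈ NN φ n l := by
  rcases Nat.eq_zero_or_pos l with rfl | hl
  · exact rfl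
  · obtain ⟨p, hp⟩ := exists_submodule_eq_NN (φ := φ) (n := n) hl
    rw [hp]; exact p.zero_mem

theorem add_mem_NN {l : ℕ} (hl : 1 ≤ l) {F G : E n → ℝ} (hF : F ∈ NN φ n l)
    (hG : G ∈ NN φ n l) : F + G ∈ NN φ n l := by
  obtain ⟨p, hp⟩ := exists_submodule_eq_NN (φ := φ) (n := n) hl
  rw [hp] at hF hG ⊢; exact p.add_mem hF hG

theorem smul_mem_NN {l : ℕ} (hl : 1 ≤ l) (c : ℝ) {F : E n → ℝ} (hF : F ∈ NN φ n l) :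
    c • F ∈ NN φ n l := by
  obtain ⟨p, hp⟩ := exists_submodule_eq_NN (φ := φ) (n := n) hl
  rw [hp] at hF ⊢; exact p.smul_mem c hF

theorem NN_subset_NNinf {l : ℕ} (hl : 1 ≤ l) : NN φ n l ⊆ NNinf φ n := fun _ hF => ⟨l, hl, hF⟩

theorem smul_mem_NNinf (c : ℝ) {F : E n → ℝ} (hF : F ∈ NNinf φ n) : c • F ∈ NNinf φ n :=
  let ⟨l, hl, hF⟩ := hF
  ⟨l, hl, smul_mem_NN hl c hF⟩

theorem exists_bound_of_mem_NN (hB : ∀ x, |φ x| ≤ B) {l : ℕ} {F : E n → ℝ}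
    (hF : F ∈ NN φ n l) : ∃ C, ∀ x, |F x| ≤ C := by
  match l, hF with
  | 0, hF => exact ⟨0, fun x => by simp [(Set.mem_singleton_iff.mp hF)]⟩
  | 1, hF => exact exists_bound_of_mem_span (by rintro _ ⟨a, b, rfl⟩; exact ⟨B, fun x => hB _⟩) hF
  | l + 2, hF =>
    exact exists_bound_of_mem_span (by rintro _ ⟨g, -, b, rfl⟩; exact ⟨B, fun x => hB _⟩) hF

theorem comp_mem_NN {l : ℕ} (hl : 1 ≤ l) {F : E n → ℝ} (hF : F ∈ NN φ n l) {g : ℝ → ℝ}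
    (hg : g ∈ ridgeSpan φ) : (fun x => g (F x)) ∈ NN φ n (l + 1) := by
  obtain ⟨m, rfl⟩ : ∃ m, l = m + 1 := ⟨l - 1, by omega⟩
  induction hg using Submodule.span_induction with
  | mem g hg =>
    obtain ⟨a, b, rfl⟩ := hg
    exact Submodule.subset_span ⟨a • F, smul_mem_NN hl a hF, b, rfl⟩
  | zero => exact Submodule.zero_mem _
  | add g₁ g₂ _ _ h₁ h₂ => exact Submodule.add_mem _ h₁ h₂
  | smul c g _ h => exact Submodule.smul_mem _ c h

theorem NN_eq_span_const (hφ : ∀ x, φ x = φ 0) {l : ℕ} (hl : 1 ≤ l) :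
    NN φ n l = ↑(ℝ ∙ fun _ : E n => φ 0) := by
  have hgen {S : Set (E n → ℝ)} (hne : S.Nonempty) (hS : ∀ f ∈ S, f = fun _ => φ 0) :
      S = {fun _ => φ 0} :=
    Set.eq_singleton_iff_nonempty_unique_mem.mpr ⟨hne, hS⟩
  obtain ⟨m, rfl⟩ : ∃ m, l = m + 1 := ⟨l - 1, by omega⟩
  cases m with
  | zero =>
    rw [NN]; congr 2
    exact hgen ⟨_, 0, 0, rfl⟩ (by rintro _ ⟨a, b, rfl⟩; ext x; exact hφ _)
  | succ m =>
    rw [NN]; congr 2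
    exact hgen ⟨_, 0, zero_mem_NN _, 0, rfl⟩ (by rintro _ ⟨g, -, b, rfl⟩; ext x; exact hφ _)

theorem NN_subset_unifClosure_NN_succ (hB : ∀ x, |φ x| ≤ B)
    (hid : (fun s => s) ∈ locUnifClosure (ridgeSpan φ)) {l : ℕ} (hl : 1 ≤ l) :
    NN φ n l ⊆ UnifClosure (NN φ n (l + 1)) := by
  intro F hF ε hε
  obtain ⟨C, hC⟩ := exists_bound_of_mem_NN hB hF
  obtain ⟨g, hg, hidg⟩ := hid (|C| + 1) (by positivity) ε hε
  exact ⟨_, comp_mem_NN hl hF hg,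
    fun x => hidg (F x) ((hC x).trans (by linarith [le_abs_self C]))⟩

theorem NN_subset_unifClosure_NN (hφc : Continuous φ) (hB : ∀ x, |φ x| ≤ B) {l L : ℕ}
    (hl : 1 ≤ l) (hlL : l ≤ L) : NN φ n l ⊆ UnifClosure (NN φ n L) := by
  by_cases hφ : ∀ x, φ x = φ 0
  · rw [NN_eq_span_const hφ hl, NN_eq_span_const hφ (hl.trans hlL)]
    exact subset_unifClosure
  obtain ⟨u, hu⟩ := not_forall.mp hφ
  have hid := id_mem_locUnifClosure_ridgeSpan hφc hB hu
  induction L, hlL using Nat.le_induction with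
  | base => exact subset_unifClosure
  | succ L hlL ih =>
    calc NN φ n l ⊆ UnifClosure (NN φ n L) := ih
      _ ⊆ UnifClosure (UnifClosure (NN φ n (L + 1))) :=
        unifClosure_mono (NN_subset_unifClosure_NN_succ hB hid (hl.trans hlL))
      _ = UnifClosure (NN φ n (L + 1)) := unifClosure_unifClosure

theorem mul_mem_unifClosure_NNinf_of_sq_mem (hB : ∀ x, |φ x| ≤ B)
    (hsq : (fun s => s ^ 2) ∈ locUnifClosure (ridgeSpan φ)) {L : ℕ} (hL : 1 ≤ L)
    {F G : E n → ℝ} (hF : F ∈ NN φ n L) (hG : G ∈ NN φ n L) :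
    (fun x => F x * G x) ∈ UnifClosure (NNinf φ n) := by
  intro ε hε
  obtain ⟨C₁, hC₁⟩ := exists_bound_of_mem_NN hB hF
  obtain ⟨C₂, hC₂⟩ := exists_bound_of_mem_NN hB hG
  obtain ⟨h, hh, hsqh⟩ := hsq (|C₁| + |C₂| + 1) (by positivity) (ε / 2) (by positivity)
  obtain ⟨p, hp⟩ := exists_submodule_eq_NN (φ := φ) (n := n) (l := L + 1) (by omega)
  have hcomp {H : E n → ℝ} (hH : H ∈ NN φ n L) : (fun x => h (H x)) ∈ p :=
    by rw [← SetLike.mem_coe, ← hp]; exact comp_mem_NN hL hH hh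
  refine ⟨(2 : ℝ)⁻¹ • ((fun x => h ((F + G) x)) - (fun x => h (F x)) - fun x => h (G x)),
    ⟨L + 1, by omega, hp ▸ p.smul_mem _ (p.sub_mem (p.sub_mem (hcomp (add_mem_NN hL hF hG))
      (hcomp hF)) (hcomp hG))⟩, fun x => ?_⟩
  have hFx := (hC₁ x).trans (le_abs_self C₁)
  have hGx := (hC₂ x).trans (le_abs_self C₂)
  have e₁ := hsqh (F x + G x) ((abs_add_le _ _).trans (by linarith))
  have e₂ := hsqh (F x) (by linarith [abs_nonneg C₂])
  have e₃ := hsqh (G x) (by linarith [abs_nonneg C₁])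
  calc |F x * G x - ((2 : ℝ)⁻¹ • ((fun x => h ((F + G) x)) - (fun x => h (F x)) -
          fun x => h (G x))) x|
      = |((F x + G x) ^ 2 - h (F x + G x)) - (F x ^ 2 - h (F x)) - (G x ^ 2 - h (G x))| / 2 := by
        rw [← abs_two, ← abs_div]; congr 1; simp only [Pi.smul_apply, Pi.sub_apply, Pi.add_apply,
          smul_eq_mul]; ring
    _ ≤ (ε / 2 + ε / 2 + ε / 2) / 2 := by
        gcongr; exact (abs_sub _ _).trans (add_le_add ((abs_sub _ _).trans (add_le_add e₁ e₂)) e₃)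
    _ ≤ ε := by linarith

theorem mul_mem_unifClosure_NNinf_of_mem_NN (hφc : Continuous φ) (hB : ∀ x, |φ x| ≤ B) {L : ℕ}
    (hL : 1 ≤ L) {F G : E n → ℝ} (hF : F ∈ NN φ n L) (hG : G ∈ NN φ n L) :
    (fun x => F x * G x) ∈ UnifClosure (NNinf φ n) := by
  by_cases hφ : ∀ x, φ x = φ 0
  · rw [NN_eq_span_const hφ hL] at hF hG
    obtain ⟨a, rfl⟩ := Submodule.mem_span_singleton.mp hF
    obtain ⟨b, rfl⟩ := Submodule.mem_span_singleton.mp hG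
    have hab : (fun x => (a • fun _ : E n => φ 0) x * (b • fun _ : E n => φ 0) x) =
        (a * b * φ 0) • fun _ => φ 0 := by
      ext; simp only [Pi.smul_apply, smul_eq_mul]; ring
    refine subset_unifClosure (NN_subset_NNinf hL ?_)
    rw [hab, NN_eq_span_const hφ hL]
    exact Submodule.mem_span_singleton.mpr ⟨_, rfl⟩
  obtain ⟨u, hu⟩ := not_forall.mp hφ
  exact mul_mem_unifClosure_NNinf_of_sq_mem hB (sq_mem_locUnifClosure_ridgeSpan hφc hB hu) hL hF hG

theorem add_mem_unifClosure_NNinf (hφc : Continuous φ) (hB : ∀ x, |φ x| ≤ B) {F G : E n → ℝ}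
    (hF : F ∈ NNinf φ n) (hG : G ∈ NNinf φ n) : F + G ∈ UnifClosure (NNinf φ n) := by
  obtain ⟨l₁, hl₁, hF⟩ := hF
  obtain ⟨l₂, hl₂, hG⟩ := hG
  have hL : 1 ≤ max l₁ l₂ := hl₁.trans (le_max_left _ _)
  exact add_mem_unifClosure
    (fun F' hF' G' hG' => subset_unifClosure (NN_subset_NNinf hL (add_mem_NN hL hF' hG')))
    (NN_subset_unifClosure_NN hφc hB hl₁ (le_max_left _ _) hF)
    (NN_subset_unifClosure_NN hφc hB hl₂ (le_max_right _ _) hG)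

theorem mul_mem_unifClosure_NNinf (hφc : Continuous φ) (hB : ∀ x, |φ x| ≤ B) {F G : E n → ℝ}
    (hF : F ∈ NNinf φ n) (hG : G ∈ NNinf φ n) :
    (fun x => F x * G x) ∈ UnifClosure (NNinf φ n) := by
  obtain ⟨l₁, hl₁, hF⟩ := hF
  obtain ⟨l₂, hl₂, hG⟩ := hG
  obtain ⟨C₁, hC₁⟩ := exists_bound_of_mem_NN hB hF
  obtain ⟨C₂, hC₂⟩ := exists_bound_of_mem_NN hB hG
  have hL : 1 ≤ max l₁ l₂ := hl₁.trans (le_max_left _ _)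
  exact mul_mem_unifClosure
    (fun F' hF' G' hG' => mul_mem_unifClosure_NNinf_of_mem_NN hφc hB hL hF' hG')
    (NN_subset_unifClosure_NN hφc hB hl₁ (le_max_left _ _) hF)
    (NN_subset_unifClosure_NN hφc hB hl₂ (le_max_right _ _) hG) hC₁ hC₂

end Networks

theorem exists_abs_le_of_tendsto_atBot_atTop {φ : ℝ → ℝ} (hφ : Continuous φ) {L₁ L₂ : ℝ}
    (h₁ : Tendsto φ atBot (𝓝 L₁)) (h₂ : Tendsto φ atTop (𝓝 L₂)) : ∃ B, ∀ x, |φ x| ≤ B := by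
  obtain ⟨B, hB⟩ := isBounded_iff_forall_norm_le.mp
    (hφ.isBounded_range_iff_isBigO_atTop_atBot.mpr ⟨h₂.isBigO_one ℝ, h₁.isBigO_one ℝ⟩)
  exact ⟨B, fun x => hB _ (mem_range_self x)⟩

theorem stmt4_general (n : ℕ) (φ : ℝ → ℝ) (hφc : Continuous φ)
    (h₁ : ∃ L₁ : ℝ, Tendsto φ atBot (𝓝 L₁))
    (h₂ : ∃ L₂ : ℝ, Tendsto φ atTop (𝓝 L₂)) :
    (∀ f g : E n → ℝ, f ∈ UnifClosure (NNinf φ n) → g ∈ UnifClosure (NNinf φ n) →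
      (fun x => f x + g x) ∈ UnifClosure (NNinf φ n)) ∧
    (∀ (c : ℝ) (f : E n → ℝ), f ∈ UnifClosure (NNinf φ n) →
      (fun x => c * f x) ∈ UnifClosure (NNinf φ n)) ∧
    (∀ f g : E n → ℝ, f ∈ UnifClosure (NNinf φ n) → g ∈ UnifClosure (NNinf φ n) →
      (fun x => f x * g x) ∈ UnifClosure (NNinf φ n)) := by
  obtain ⟨L₁, h₁⟩ := h₁
  obtain ⟨L₂, h₂⟩ := h₂
  obtain ⟨B, hB⟩ := exists_abs_le_of_tendsto_atBot_atTop hφc h₁ h₂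
  have hbdd : ∀ F ∈ NNinf φ n, ∃ C, ∀ x, |F x| ≤ C := fun F ⟨_, _, hF⟩ =>
    exists_bound_of_mem_NN hB hF
  refine ⟨fun f g hf hg => add_mem_unifClosure (fun F hF G hG =>
      add_mem_unifClosure_NNinf hφc hB hF hG) hf hg,
    fun c f hf => const_mul_mem_unifClosure c
      (fun F hF => subset_unifClosure (smul_mem_NNinf c hF)) hf,
    fun f g hf hg => ?_⟩
  obtain ⟨C₁, hC₁⟩ := exists_bound_of_mem_unifClosure hbdd hf
  obtain ⟨C₂, hC₂⟩ := exists_bound_of_mem_unifClosure hbdd hg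
  exact mul_mem_unifClosure (fun F hF G hG => mul_mem_unifClosure_NNinf hφc hB hF hG) hf hg hC₁ hC₂

/-- If `φ` is continuous with finite limits at `±∞`, then the uniform closure
of `N^∞_φ(ℝⁿ)` is an algebra under the pointwise operations; in particular it
is closed under pointwise products. -/
theorem stmt4 (n : ℕ) (hn : 1 ≤ n) (φ : ℝ → ℝ) (hφc : Continuous φ)
    (h₁ : ∃ L₁ : ℝ, Tendsto φ atBot (𝓝 L₁))
    (h₂ : ∃ L₂ : ℝ, Tendsto φ atTop (𝓝 L₂)) :
    (∀ f g : E n → ℝ, f ∈ UnifClosure (NNinf φ n) → g ∈ UnifClosure (NNinf φ n) →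
      (fun x => f x + g x) ∈ UnifClosure (NNinf φ n)) ∧
    (∀ (c : ℝ) (f : E n → ℝ), f ∈ UnifClosure (NNinf φ n) →
      (fun x => c * f x) ∈ UnifClosure (NNinf φ n)) ∧
    (∀ f g : E n → ℝ, f ∈ UnifClosure (NNinf φ n) → g ∈ UnifClosure (NNinf φ n) →
      (fun x => f x * g x) ∈ UnifClosure (NNinf φ n)) :=
  stmt4_general n φ hφc h₁ h₂
end
end

section
/- Let g : ℝ → ℝ be continuous with compact support, and define f : ℝ² → ℝ by f(x,y) := ∫₀^{2π} g(x cos θ + y sin θ) dθ. Then f ∈ C₀(ℝ²). If moreover ∫_ℝ g(x) dx = 0, then there exists a constant C ∈ ℝ such that |f(x,y)| ≤ C / (1 + ‖(x,y)‖³) for all (x,y) ∈ ℝ², where ‖(x,y)‖ = √(x² + y²). -/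
/-!
Writing `(x, y) = ρ (cos φ, sin φ)` turns the integrand into `g (ρ cos (θ - φ))`, so by periodicity
`f (x, y) = F ρ` with `F r = ∫₀^{2π} g (r cos θ) dθ`. If `g` vanishes outside `(-R, R)` and
`r ≥ 2R`, the substitution `u = r cos θ` gives `F r = 2 ∫_{-R}^{R} g u / √(r² - u²) du`; the
kernel is at most `2 / r`, whence `F r = O(1/r)`. When `∫ g = 0` the kernel may be replaced by
its difference with `1 / r`, which is `O(R² / r³)`, whence `F r = O(1/r³)`.
-/

open Filter Topology MeasureTheory Real

noncomputable def radialProfile (g : ℝ → ℝ) (r : ℝ) : ℝ := ∫ θ in 0..2 * π, g (r * cos θ)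

theorem continuous_radialProfile {g : ℝ → ℝ} (hg : Continuous g) : Continuous (radialProfile g) :=
  intervalIntegral.continuous_parametric_intervalIntegral_of_continuous' (by fun_prop) _ _

theorem integral_comp_mul_cos_add_mul_sin (g : ℝ → ℝ) (x y : ℝ) :
    ∫ θ in 0..2 * π, g (x * cos θ + y * sin θ) = radialProfile g √(x ^ 2 + y ^ 2) := by
  set z : ℂ := ⟨x, y⟩
  have hz : ‖z‖ = √(x ^ 2 + y ^ 2) := by
    rw [Complex.norm_def, Complex.normSq_mk, sq, sq]
  have hrot (θ : ℝ) : x * cos θ + y * sin θ = ‖z‖ * cos (θ - z.arg) := by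
    have hx : ‖z‖ * cos z.arg = x := Complex.norm_mul_cos_arg z
    have hy : ‖z‖ * sin z.arg = y := Complex.norm_mul_sin_arg z
    rw [cos_sub]
    linear_combination (-cos θ) * hx - sin θ * hy
  have hper : Function.Periodic (fun θ ↦ g (‖z‖ * cos θ)) (2 * π) := fun θ ↦ by
    simp only [cos_add_two_pi]
  simp_rw [hrot, intervalIntegral.integral_comp_sub_right (fun θ ↦ g (‖z‖ * cos θ)), radialProfile,
    ← hz]
  rw [zero_sub, sub_eq_neg_add]
  simpa using hper.intervalIntegral_add_eq (-z.arg) 0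

theorem integral_zero_pi_comp_mul_cos (g : ℝ → ℝ) {r : ℝ} (hr : 0 < r) :
    ∫ θ in 0..π, g (r * cos θ) = ∫ u in -r..r, g u / √(r ^ 2 - u ^ 2) := by
  have hsubst := intervalIntegral.integral_comp_mul_deriv_of_deriv_nonpos
    (f := fun θ ↦ r * cos θ) (g := fun u ↦ g u / √(r ^ 2 - u ^ 2)) (a := 0) (b := π)
    (continuous_const.mul continuous_cos).continuousOn
    (fun θ _ ↦ (hasDerivAt_cos θ).const_mul r)
    (fun θ hθ ↦ by
      rw [min_eq_left pi_pos.le, max_eq_right pi_pos.le] at hθ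
      nlinarith [sin_pos_of_pos_of_lt_pi hθ.1 hθ.2])
  rw [cos_zero, cos_pi, mul_one, mul_neg_one] at hsubst
  rw [intervalIntegral.integral_symm r, ← hsubst, ← intervalIntegral.integral_neg]
  refine intervalIntegral.integral_congr_Ioo_of_le pi_pos.le fun θ hθ ↦ ?_
  have hsin := sin_pos_of_pos_of_lt_pi hθ.1 hθ.2
  have hsqrt : √(r ^ 2 - (r * cos θ) ^ 2) = r * sin θ := by
    rw [← sqrt_sq (mul_pos hr hsin).le]
    congr 1
    nlinarith [sin_sq_add_cos_sq θ]
  simp only [Function.comp, hsqrt]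
  field_simp

theorem radialProfile_eq_two_mul_integral_zero_pi {g : ℝ → ℝ} (hg : Continuous g) (r : ℝ) :
    radialProfile g r = 2 * ∫ θ in 0..π, g (r * cos θ) := by
  have hint (a b : ℝ) : IntervalIntegrable (fun θ ↦ g (r * cos θ)) volume a b :=
    (hg.comp (continuous_const.mul continuous_cos)).intervalIntegrable a b
  have hrefl : ∫ θ in π..2 * π, g (r * cos θ) = ∫ θ in 0..π, g (r * cos θ) := by
    simpa [cos_sub, two_mul] using (intervalIntegral.integral_comp_sub_left
      (fun θ ↦ g (r * cos θ)) (a := 0) (b := π) (2 * π)).symm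
  rw [radialProfile, ← intervalIntegral.integral_add_adjacent_intervals (hint 0 π) (hint π _),
    hrefl, two_mul]

theorem support_subset_Ioc_of_forall_le_abs {g : ℝ → ℝ} {R : ℝ}
    (hsupp : ∀ u, R ≤ |u| → g u = 0) : Function.support g ⊆ Set.Ioc (-R) R := fun u hu ↦
  have hu : |u| < R := lt_of_not_ge fun h ↦ hu (hsupp u h)
  ⟨(abs_lt.1 hu).1, (abs_lt.1 hu).2.le⟩

theorem radialProfile_eq_integral_div_sqrt {g : ℝ → ℝ} (hg : Continuous g) {R r : ℝ}
    (hsupp : ∀ u, R ≤ |u| → g u = 0) (hr : 0 < r) (hRr : R ≤ r) :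
    radialProfile g r = 2 * ∫ u in -R..R, g u / √(r ^ 2 - u ^ 2) := by
  have hsub : Function.support (fun u ↦ g u / √(r ^ 2 - u ^ 2)) ⊆ Set.Ioc (-R) R :=
    (Function.support_div _ _).subset.trans <|
      Set.inter_subset_left.trans (support_subset_Ioc_of_forall_le_abs hsupp)
  rw [radialProfile_eq_two_mul_integral_zero_pi hg, integral_zero_pi_comp_mul_cos g hr,
    intervalIntegral.integral_eq_integral_of_support_subset
      (hsub.trans (Set.Ioc_subset_Ioc (neg_le_neg hRr) hRr)),
    intervalIntegral.integral_eq_integral_of_support_subset hsub]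

theorem half_le_sqrt_sq_sub_sq {u R r : ℝ} (hu : |u| ≤ R) (hr : 2 * R ≤ r) :
    r / 2 ≤ √(r ^ 2 - u ^ 2) := by
  have hu2 : u ^ 2 ≤ R ^ 2 := sq_le_sq' (abs_le.1 hu).1 (abs_le.1 hu).2
  exact le_sqrt_of_sq_le (by nlinarith [abs_nonneg u])

theorem abs_inv_sqrt_sq_sub_sq_sub_inv_le {u R r : ℝ} (hR : 0 < R) (hu : |u| ≤ R)
    (hr : 2 * R ≤ r) : |(√(r ^ 2 - u ^ 2))⁻¹ - r⁻¹| ≤ 2 * R ^ 2 / r ^ 3 := by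
  have hu2 : u ^ 2 ≤ R ^ 2 := sq_le_sq' (abs_le.1 hu).1 (abs_le.1 hu).2
  have hr0 : 0 < r := by linarith
  set s := √(r ^ 2 - u ^ 2)
  have hs : r / 2 ≤ s := half_le_sqrt_sq_sub_sq hu hr
  have hs0 : 0 < s := by linarith
  have hsq : s ^ 2 = r ^ 2 - u ^ 2 := sq_sqrt (by nlinarith)
  have hdiff : s⁻¹ - r⁻¹ = u ^ 2 / (r * s * (r + s)) := by
    field_simp
    nlinarith
  have hden : r ^ 3 ≤ 2 * (r * s * (r + s)) := by nlinarith [mul_pos hr0 hs0]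
  rw [hdiff, abs_of_nonneg (by positivity), div_le_div_iff₀ (by positivity) (by positivity)]
  calc u ^ 2 * r ^ 3 ≤ R ^ 2 * (2 * (r * s * (r + s))) := by gcongr
    _ = 2 * R ^ 2 * (r * s * (r + s)) := by ring

theorem abs_intervalIntegral_neg_le {h : ℝ → ℝ} {R K : ℝ} (hR : 0 ≤ R)
    (hK : ∀ u, |u| ≤ R → |h u| ≤ K) : |∫ u in -R..R, h u| ≤ 2 * R * K := by
  have := intervalIntegral.norm_integral_le_of_norm_le_const (f := h) (a := -R) (b := R) (C := K)
    fun u hu ↦ by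
      rw [Set.uIoc_of_le (by linarith)] at hu
      exact hK u (abs_le.2 ⟨hu.1.le, hu.2⟩)
  rw [Real.norm_eq_abs, sub_neg_eq_add, abs_of_nonneg (a := R + R) (by linarith)] at this
  linarith

theorem exists_abs_le_div_one_add_pow {F : ℝ → ℝ} {A B ρ : ℝ} (n : ℕ) (hρ : 0 < ρ)
    (hA : ∀ r, |F r| ≤ A) (hB : ∀ r, ρ ≤ r → |F r| ≤ B / r ^ n) :
    ∃ C, ∀ r, 0 ≤ r → |F r| ≤ C / (1 + r ^ n) := by
  have hA0 : 0 ≤ A := (abs_nonneg _).trans (hA 0)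
  have hb : 0 ≤ B / ρ ^ n := (abs_nonneg _).trans (hB ρ le_rfl)
  refine ⟨(A + B / ρ ^ n) * (1 + ρ ^ n), fun r hr ↦ ?_⟩
  rw [le_div_iff₀ (add_pos_of_pos_of_nonneg one_pos (pow_nonneg hr n))]
  rcases lt_or_ge r ρ with hrρ | hρr
  · have : r ^ n ≤ ρ ^ n := pow_le_pow_left₀ hr hrρ.le n
    calc |F r| * (1 + r ^ n) ≤ A * (1 + ρ ^ n) := by gcongr; exact hA r
      _ ≤ _ := by gcongr; linarith
  · have hρn : ρ ^ n ≤ r ^ n := pow_le_pow_left₀ hρ.le hρr n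
    have hrn : 0 < r ^ n := pow_pos (hρ.trans_le hρr) n
    have hFr : |F r| * r ^ n ≤ B / ρ ^ n * ρ ^ n := by
      rw [div_mul_cancel₀ _ (pow_pos hρ n).ne']
      exact (le_div_iff₀ hrn).1 (hB r hρr)
    have hFb : |F r| ≤ B / ρ ^ n :=
      le_of_mul_le_mul_right (hFr.trans (mul_le_mul_of_nonneg_left hρn hb)) hrn
    nlinarith [mul_nonneg hA0 (pow_nonneg hρ.le n)]

theorem abs_radialProfile_le {g : ℝ → ℝ} {M : ℝ} (hM : ∀ u, |g u| ≤ M) (r : ℝ) :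
    |radialProfile g r| ≤ 2 * π * M := by
  have := intervalIntegral.norm_integral_le_of_norm_le_const (f := fun θ ↦ g (r * cos θ))
    (a := 0) (b := 2 * π) fun θ _ ↦ (hM (r * cos θ) : ‖g (r * cos θ)‖ ≤ M)
  rw [sub_zero, abs_of_pos two_pi_pos] at this
  rw [radialProfile, ← Real.norm_eq_abs]
  linarith

theorem abs_radialProfile_le_div {g : ℝ → ℝ} (hg : Continuous g) {M R r : ℝ}
    (hsupp : ∀ u, R ≤ |u| → g u = 0) (hM : ∀ u, |g u| ≤ M) (hR : 0 < R) (hr : 2 * R ≤ r) :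
    |radialProfile g r| ≤ 8 * M * R / r := by
  have hr0 : 0 < r := by linarith
  have hpt (u : ℝ) (hu : |u| ≤ R) : |g u / √(r ^ 2 - u ^ 2)| ≤ M * (2 / r) := by
    have hinv : (√(r ^ 2 - u ^ 2))⁻¹ ≤ 2 / r := by
      rw [← inv_div]
      exact inv_anti₀ (by positivity) (half_le_sqrt_sq_sub_sq hu hr)
    rw [abs_div, abs_of_nonneg (sqrt_nonneg _), div_eq_mul_inv]
    exact mul_le_mul (hM u) hinv (by positivity) ((abs_nonneg _).trans (hM u))
  rw [radialProfile_eq_integral_div_sqrt hg hsupp hr0 (by linarith), abs_mul, abs_two]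
  calc 2 * |∫ u in -R..R, g u / √(r ^ 2 - u ^ 2)| ≤ 2 * (2 * R * (M * (2 / r))) := by
        gcongr; exact abs_intervalIntegral_neg_le hR.le hpt
    _ = 8 * M * R / r := by field_simp; ring

theorem abs_radialProfile_le_div_pow_three {g : ℝ → ℝ} (hg : Continuous g) {M R r : ℝ}
    (hsupp : ∀ u, R ≤ |u| → g u = 0) (hM : ∀ u, |g u| ≤ M) (hR : 0 < R) (hr : 2 * R ≤ r)
    (hzero : ∫ u, g u = 0) :
    |radialProfile g r| ≤ 8 * M * R ^ 3 / r ^ 3 := by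
  have hr0 : 0 < r := by linarith
  have hsqrt_pos (u : ℝ) (hu : |u| ≤ R) : 0 < √(r ^ 2 - u ^ 2) :=
    (half_pos hr0).trans_le (half_le_sqrt_sq_sub_sq hu hr)
  have hint : IntervalIntegrable (fun u ↦ g u / √(r ^ 2 - u ^ 2)) volume (-R) R := by
    refine ContinuousOn.intervalIntegrable (hg.continuousOn.div (by fun_prop) fun u hu ↦ ?_)
    rw [Set.uIcc_of_le (by linarith)] at hu
    exact (hsqrt_pos u (abs_le.2 hu)).ne'
  have hmean : ∫ u in -R..R, g u / r = 0 := by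
    rw [intervalIntegral.integral_div, intervalIntegral.integral_eq_integral_of_support_subset
      (support_subset_Ioc_of_forall_le_abs hsupp), hzero, zero_div]
  have hpt (u : ℝ) (hu : |u| ≤ R) :
      |g u / √(r ^ 2 - u ^ 2) - g u / r| ≤ M * (2 * R ^ 2 / r ^ 3) := by
    rw [div_eq_mul_inv, div_eq_mul_inv, ← mul_sub, abs_mul]
    exact mul_le_mul (hM u) (abs_inv_sqrt_sq_sub_sq_sub_inv_le hR hu hr) (abs_nonneg _)
      ((abs_nonneg _).trans (hM u))
  rw [radialProfile_eq_integral_div_sqrt hg hsupp hr0 (by linarith), ← sub_zero (∫ u in -R..R, _),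
    ← hmean, ← intervalIntegral.integral_sub hint ((hg.div_const r).intervalIntegrable _ _),
    abs_mul, abs_two]
  calc 2 * |∫ u in -R..R, g u / √(r ^ 2 - u ^ 2) - g u / r|
      ≤ 2 * (2 * R * (M * (2 * R ^ 2 / r ^ 3))) := by
        gcongr; exact abs_intervalIntegral_neg_le hR.le hpt
    _ = 8 * M * R ^ 3 / r ^ 3 := by field_simp; ring

theorem HasCompactSupport.exists_pos_le_abs {g : ℝ → ℝ} (hgs : HasCompactSupport g) :
    ∃ R, 0 < R ∧ ∀ u, R ≤ |u| → g u = 0 := by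
  simpa only [Real.norm_eq_abs] using hgs.exists_pos_le_norm

theorem tendsto_radialProfile_atTop {g : ℝ → ℝ} (hg : Continuous g) (hgs : HasCompactSupport g) :
    Tendsto (radialProfile g) atTop (𝓝 0) := by
  obtain ⟨M, hM⟩ := hgs.exists_bound_of_continuous hg
  obtain ⟨R, hR, hsupp⟩ := hgs.exists_pos_le_abs
  refine squeeze_zero_norm' ?_ ((tendsto_const_nhds (x := 8 * M * R)).div_atTop tendsto_id)
  filter_upwards [eventually_ge_atTop (2 * R)] with r hr
  exact abs_radialProfile_le_div hg hsupp hM hR hr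

theorem exists_abs_radialProfile_le_div_one_add_pow_three {g : ℝ → ℝ} (hg : Continuous g)
    (hgs : HasCompactSupport g) (hzero : ∫ u, g u = 0) :
    ∃ C, ∀ r, 0 ≤ r → |radialProfile g r| ≤ C / (1 + r ^ 3) := by
  obtain ⟨M, hM⟩ := hgs.exists_bound_of_continuous hg
  obtain ⟨R, hR, hsupp⟩ := hgs.exists_pos_le_abs
  exact exists_abs_le_div_one_add_pow 3 (by positivity : 0 < 2 * R) (abs_radialProfile_le hM)
    fun r hr ↦ abs_radialProfile_le_div_pow_three hg hsupp hM hR hr hzero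

theorem tendsto_sqrt_sq_add_sq_cocompact :
    Tendsto (fun p : ℝ × ℝ ↦ √(p.1 ^ 2 + p.2 ^ 2)) (cocompact (ℝ × ℝ)) atTop := by
  refine tendsto_atTop_mono (fun p ↦ ?_) tendsto_norm_cocompact_atTop
  rw [Prod.norm_def, Real.norm_eq_abs, Real.norm_eq_abs]
  exact max_le (abs_le_sqrt (by nlinarith)) (abs_le_sqrt (by nlinarith))

/-- For `g` continuous with compact support, the rotational average
`f(x,y) = ∫₀^{2π} g(x cos θ + y sin θ) dθ` vanishes at infinity; if moreover
`∫ g = 0`, then `|f(x,y)| ≤ C / (1 + ‖(x,y)‖³)`. -/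
theorem stmt6 (g : ℝ → ℝ) (hg : Continuous g) (hgsupp : HasCompactSupport g)
    (f : ℝ × ℝ → ℝ)
    (hf : ∀ p : ℝ × ℝ,
      f p = ∫ θ in (0:ℝ)..(2 * Real.pi), g (p.1 * Real.cos θ + p.2 * Real.sin θ)) :
    (Continuous f ∧ Tendsto f (cocompact (ℝ × ℝ)) (𝓝 0)) ∧
    ((∫ x, g x) = 0 → ∃ C : ℝ, ∀ p : ℝ × ℝ,
      |f p| ≤ C / (1 + Real.sqrt (p.1 ^ 2 + p.2 ^ 2) ^ 3)) := by
  obtain rfl : f = fun p ↦ radialProfile g √(p.1 ^ 2 + p.2 ^ 2) :=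
    funext fun p ↦ (hf p).trans (integral_comp_mul_cos_add_mul_sin g p.1 p.2)
  refine ⟨⟨(continuous_radialProfile hg).comp (by fun_prop),
    (tendsto_radialProfile_atTop hg hgsupp).comp tendsto_sqrt_sq_add_sq_cocompact⟩, fun hzero ↦ ?_⟩
  obtain ⟨C, hC⟩ := exists_abs_radialProfile_le_div_one_add_pow_three hg hgsupp hzero
  exact ⟨C, fun p ↦ hC _ (sqrt_nonneg _)⟩
end

section
/- Let φ : ℝ → ℝ be bounded and continuous, let n ∈ ℕ, and let A be a sup-norm closed subalgebra of the algebra C_b(ℝⁿ) of bounded continuous functions ℝⁿ → ℝ (i.e., A is a linear subspace closed under pointwise multiplication and closed in the supremum norm). If N¹_φ(ℝⁿ) ⊆ A, then N^l_φ(ℝⁿ) ⊆ A for every l ∈ ℕ. -/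
open Filter Topology MeasureTheory

noncomputable section

/-! A closed subalgebra of `C_b` containing a nonzero constant contains `h ∘ g` for every
`g` in it and every continuous `h : ℝ → ℝ`: by Weierstrass, `h` is a uniform limit of
polynomials on the bounded range of `g`. Since `N¹_φ` contains the constants `φ(0 ⬝ x + b)`,
this shows `φ(g + b) ∈ A` for `g ∈ A` (trivially so if `φ = 0`), and induction on the
depth finishes. -/

section ClosedSubalgebra

variable {α : Type*} {A : Set (α → ℝ)}

theorem span_subset_of_add_smul_mem (hA0 : (0 : α → ℝ) ∈ A)
    (hAadd : ∀ f ∈ A, ∀ g ∈ A, (fun x => f x + g x) ∈ A)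
    (hAsmul : ∀ (c : ℝ), ∀ f ∈ A, (fun x => c * f x) ∈ A) {S : Set (α → ℝ)} (hS : S ⊆ A) :
    ↑(Submodule.span ℝ S) ⊆ A := by
  intro f hf
  induction hf using Submodule.span_induction with
  | mem f hf => exact hS hf
  | zero => exact hA0
  | add f g _ _ hf hg => exact hAadd f hf g hg
  | smul c f _ hf => exact hAsmul c f hf

theorem const_mem_of_const_mem_of_ne_zero
    (hAsmul : ∀ (c : ℝ), ∀ f ∈ A, (fun x => c * f x) ∈ A) {c₀ : ℝ} (hc₀ : c₀ ≠ 0)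
    (hA : (fun _ => c₀) ∈ A) (c : ℝ) : (fun _ => c) ∈ A := by
  simpa [div_mul_cancel₀ c hc₀] using hAsmul (c / c₀) _ hA

theorem polynomial_eval_comp_mem (hAconst : ∀ c : ℝ, (fun _ => c) ∈ A)
    (hAadd : ∀ f ∈ A, ∀ g ∈ A, (fun x => f x + g x) ∈ A)
    (hAmul : ∀ f ∈ A, ∀ g ∈ A, (fun x => f x * g x) ∈ A) {g : α → ℝ} (hg : g ∈ A)
    (p : Polynomial ℝ) : (fun x => p.eval (g x)) ∈ A := by
  induction p using Polynomial.induction_on with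
  | C c => simpa using hAconst c
  | add p q hp hq => simpa using hAadd _ hp _ hq
  | monomial k c hk => simpa [pow_succ, mul_assoc] using hAmul _ hk _ hg

theorem comp_mem_of_continuous (hAconst : ∀ c : ℝ, (fun _ => c) ∈ A)
    (hAadd : ∀ f ∈ A, ∀ g ∈ A, (fun x => f x + g x) ∈ A)
    (hAmul : ∀ f ∈ A, ∀ g ∈ A, (fun x => f x * g x) ∈ A) (hAclosed : UnifClosure A ⊆ A)
    {g : α → ℝ} (hg : g ∈ A) (hgb : ∃ M : ℝ, ∀ x, |g x| ≤ M) {h : ℝ → ℝ} (hh : Continuous h) :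
    (fun x => h (g x)) ∈ A := by
  obtain ⟨M, hM⟩ := hgb
  refine hAclosed fun ε hε => ?_
  obtain ⟨p, hp⟩ := exists_polynomial_near_of_continuousOn (-M) M h hh.continuousOn ε hε
  refine ⟨fun x => p.eval (g x), polynomial_eval_comp_mem hAconst hAadd hAmul hg p, fun x => ?_⟩
  rw [abs_sub_comm]
  exact (hp (g x) (abs_le.mp (hM x))).le

end ClosedSubalgebra

theorem const_mem_NN_one (φ : ℝ → ℝ) (n : ℕ) (b : ℝ) : (fun _ => φ b) ∈ NN φ n 1 :=
  Submodule.subset_span ⟨0, b, by simp⟩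

theorem zero_mem_NN_one (φ : ℝ → ℝ) (n : ℕ) : (0 : E n → ℝ) ∈ NN φ n 1 :=
  Submodule.zero_mem _

theorem stmt11_general (φ : ℝ → ℝ) (hφc : Continuous φ)
    (n : ℕ) (A : Set (E n → ℝ))
    (hAcb : ∀ f ∈ A, Continuous f ∧ ∃ M : ℝ, ∀ x, |f x| ≤ M)
    (hAadd : ∀ f ∈ A, ∀ g ∈ A, (fun x => f x + g x) ∈ A)
    (hAsmul : ∀ (c : ℝ), ∀ f ∈ A, (fun x => c * f x) ∈ A)
    (hAmul : ∀ f ∈ A, ∀ g ∈ A, (fun x => f x * g x) ∈ A)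
    (hAclosed : UnifClosure A ⊆ A)
    (hA1 : NN φ n 1 ⊆ A) :
    ∀ l : ℕ, 1 ≤ l → NN φ n l ⊆ A := by
  have hA0 : (0 : E n → ℝ) ∈ A := hA1 (zero_mem_NN_one φ n)
  have hlayer : ∀ g ∈ A, ∀ b : ℝ, (fun x => φ (g x + b)) ∈ A := by
    intro g hg b
    by_cases hφ0 : φ = 0
    · simp only [hφ0, Pi.zero_apply]
      exact hA0
    obtain ⟨b₀, hb₀⟩ := Function.ne_iff.mp hφ0
    have hAconst := const_mem_of_const_mem_of_ne_zero hAsmul hb₀ (hA1 (const_mem_NN_one φ n b₀))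
    exact comp_mem_of_continuous hAconst hAadd hAmul hAclosed hg (hAcb g hg).2
      (hφc.comp (continuous_add_const b))
  intro l hl
  induction l, hl using Nat.le_induction with
  | base => exact hA1
  | succ l hl ih =>
    obtain ⟨m, rfl⟩ := Nat.exists_eq_add_of_le' hl
    refine span_subset_of_add_smul_mem hA0 hAadd hAsmul ?_
    rintro f ⟨g, hg, b, rfl⟩
    exact hlayer g (ih hg) b

/-- If `φ` is bounded and continuous and `A` is a uniformly closed subalgebra
of `C_b(ℝⁿ)` containing `N¹_φ(ℝⁿ)`, then `A` contains `N^l_φ(ℝⁿ)` for every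
`l ∈ ℕ`. -/
theorem stmt11 (φ : ℝ → ℝ) (hφc : Continuous φ) (hφb : ∃ M : ℝ, ∀ x, |φ x| ≤ M)
    (n : ℕ) (hn : 1 ≤ n) (A : Set (E n → ℝ))
    (hAcb : ∀ f ∈ A, Continuous f ∧ ∃ M : ℝ, ∀ x, |f x| ≤ M)
    (hAadd : ∀ f ∈ A, ∀ g ∈ A, (fun x => f x + g x) ∈ A)
    (hAsmul : ∀ (c : ℝ), ∀ f ∈ A, (fun x => c * f x) ∈ A)
    (hAmul : ∀ f ∈ A, ∀ g ∈ A, (fun x => f x * g x) ∈ A)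
    (hAclosed : UnifClosure A ⊆ A)
    (hA1 : NN φ n 1 ⊆ A) :
    ∀ l : ℕ, 1 ≤ l → NN φ n l ⊆ A :=
  stmt11_general φ hφc n A hAcb hAadd hAsmul hAmul hAclosed hA1
end
end

section
/- Let φ ∈ C₀(ℝ) and n ∈ ℕ. Then N^∞_φ(ℝⁿ) ⊆ C_R(ℝⁿ), i.e., every neural network with activation function φ and any number of hidden layers belongs to the commutative resolvent algebra. -/
open Filter Topology MeasureTheory

noncomputable section

/-- The (real part of the) commutative resolvent algebra `C_R(ℝⁿ)`: the
uniformly closed span of the functions `g ∘ P_V` with `V ⊆ ℝⁿ` a linear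
subspace, `P_V` the orthogonal projection onto `V`, and `g ∈ C₀(V)`. -/
def CR (n : ℕ) : Set (E n → ℝ) :=
  UnifClosure ↑(Submodule.span ℝ
    {f : E n → ℝ | ∃ (V : Submodule ℝ (E n)) (g : V → ℝ),
      Continuous g ∧ Tendsto g (cocompact V) (𝓝 0) ∧
      f = fun x => g (Submodule.orthogonalProjection V x)})

/-- `C₀(ℝ)`: continuous real-valued functions on `ℝ` vanishing at infinity. -/
def C0R : Set (ℝ → ℝ) :=
  {f | Continuous f ∧ Tendsto f (cocompact ℝ) (𝓝 0)}

/-!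
Every generator `g ∘ P_V` of `C_R` is bounded, and the product of two generators
`g₁ ∘ P_{V₁}` and `g₂ ∘ P_{V₂}` is again a generator, living on `V₁ ⊔ V₂`: there
`w ↦ (P_{V₁} w, P_{V₂} w)` is injective, so `g₁ ⊗ g₂` pulled back along it still vanishes at
infinity. Hence the span of the generators is an algebra of bounded functions, and `C_R` is its
uniform closure. A first-layer neuron `φ (⟪a, x⟫ + b)` is itself the generator on `V = ℝ a`.
The uniform closure of an algebra of bounded functions is stable under post-composition with a
uniformly continuous `ψ`: on the bounded range of an approximant, `ψ` is uniformly close to a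
polynomial (Weierstrass). Since `φ ∈ C₀(ℝ)` is uniformly continuous, induction on the number of
layers concludes.
-/

namespace UnifClosure

variable {α : Type*}

theorem subset (S : Set (α → ℝ)) : S ⊆ UnifClosure S :=
  fun f hf _ hε => ⟨f, hf, fun x => by simpa using hε.le⟩

theorem add_mem {p : Submodule ℝ (α → ℝ)} {f g : α → ℝ}
    (hf : f ∈ UnifClosure (p : Set (α → ℝ))) (hg : g ∈ UnifClosure (p : Set (α → ℝ))) :
    f + g ∈ UnifClosure (p : Set (α → ℝ)) := by
  intro ε hε
  obtain ⟨f', hf', hff'⟩ := hf (ε / 2) (half_pos hε)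
  obtain ⟨g', hg', hgg'⟩ := hg (ε / 2) (half_pos hε)
  refine ⟨f' + g', p.add_mem hf' hg', fun x => ?_⟩
  calc |(f + g) x - (f' + g') x| = |(f x - f' x) + (g x - g' x)| := by
        rw [Pi.add_apply, Pi.add_apply, add_sub_add_comm]
    _ ≤ |f x - f' x| + |g x - g' x| := abs_add_le _ _
    _ ≤ ε := by linarith [hff' x, hgg' x]

theorem smul_mem {p : Submodule ℝ (α → ℝ)} (c : ℝ) {f : α → ℝ}
    (hf : f ∈ UnifClosure (p : Set (α → ℝ))) : c • f ∈ UnifClosure (p : Set (α → ℝ)) := by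
  intro ε hε
  have hc : 0 < |c| + 1 := by positivity
  obtain ⟨f', hf', hff'⟩ := hf (ε / (|c| + 1)) (div_pos hε hc)
  refine ⟨c • f', p.smul_mem c hf', fun x => ?_⟩
  calc |(c • f) x - (c • f') x| = |c| * |f x - f' x| := by
        simp only [Pi.smul_apply, smul_eq_mul, ← mul_sub, abs_mul]
    _ ≤ (|c| + 1) * (ε / (|c| + 1)) := mul_le_mul (by linarith) (hff' x) (abs_nonneg _) hc.le
    _ = ε := mul_div_cancel₀ ε hc.ne'

theorem comp_mem {A : Subalgebra ℝ (α → ℝ)} (hA : ∀ f ∈ A, ∃ M, ∀ x, |f x| ≤ M)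
    {ψ : ℝ → ℝ} (hψ : UniformContinuous ψ) {f : α → ℝ}
    (hf : f ∈ UnifClosure (A : Set (α → ℝ))) : ψ ∘ f ∈ UnifClosure (A : Set (α → ℝ)) := by
  intro ε hε
  obtain ⟨δ, hδ, hψδ⟩ := Metric.uniformContinuous_iff.mp hψ (ε / 2) (half_pos hε)
  obtain ⟨g, hgA, hfg⟩ := hf (δ / 2) (half_pos hδ)
  obtain ⟨M, hM⟩ := hA g hgA
  obtain ⟨p, hp⟩ := exists_polynomial_near_of_continuousOn (-M) M ψ
    hψ.continuous.continuousOn (ε / 2) (half_pos hε)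
  refine ⟨Polynomial.aeval g p, Subalgebra.aeval_coe A ⟨g, hgA⟩ p ▸ SetLike.coe_mem _, fun x => ?_⟩
  have hψ_close : |ψ (f x) - ψ (g x)| < ε / 2 :=
    hψδ (by rw [Real.dist_eq]; linarith [hfg x])
  have hp_close : |p.eval (g x) - ψ (g x)| < ε / 2 := hp (g x) (abs_le.mp (hM x))
  rw [abs_lt] at hψ_close hp_close
  rw [Function.comp_apply, Polynomial.aeval_pi_apply₂, Polynomial.coe_aeval_eq_eval, abs_le]
  constructor <;> linarith

end UnifClosure

def Submodule.unifClosure {α : Type*} (p : Submodule ℝ (α → ℝ)) : Submodule ℝ (α → ℝ) where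
  carrier := UnifClosure (p : Set (α → ℝ))
  add_mem' := UnifClosure.add_mem
  zero_mem' := UnifClosure.subset _ p.zero_mem
  smul_mem' := UnifClosure.smul_mem

theorem exists_abs_le_of_tendsto_cocompact {X : Type*} [TopologicalSpace X] {g : X → ℝ}
    (hc : Continuous g) (ht : Tendsto g (cocompact X) (𝓝 0)) : ∃ M, ∀ x, |g x| ≤ M := by
  obtain ⟨M, hM⟩ := (ZeroAtInftyContinuousMap.isBounded_range ⟨⟨g, hc⟩, ht⟩).exists_norm_le
  exact ⟨M, fun x => hM _ ⟨x, rfl⟩⟩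

theorem tendsto_mul_cocompact_prod {X Y : Type*} [TopologicalSpace X] [TopologicalSpace Y]
    {f : X → ℝ} {g : Y → ℝ} (hfc : Continuous f) (hft : Tendsto f (cocompact X) (𝓝 0))
    (hgc : Continuous g) (hgt : Tendsto g (cocompact Y) (𝓝 0)) :
    Tendsto (fun p : X × Y => f p.1 * g p.2) (cocompact (X × Y)) (𝓝 0) := by
  obtain ⟨Mf, hMf⟩ := exists_abs_le_of_tendsto_cocompact hfc hft
  obtain ⟨Mg, hMg⟩ := exists_abs_le_of_tendsto_cocompact hgc hgt
  rw [← Filter.coprod_cocompact, Filter.coprod, tendsto_sup]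
  exact ⟨(hft.comp tendsto_comap).zero_mul_isBoundedUnder_le
      (isBoundedUnder_of ⟨Mg, fun p => by simpa using hMg p.2⟩),
    isBoundedUnder_le_mul_tendsto_zero
      (isBoundedUnder_of ⟨Mf, fun p => by simpa using hMf p.1⟩) (hgt.comp tendsto_comap)⟩

theorem Submodule.ker_orthogonalProjectionOnto_prod_comp_sup_subtype {F : Type*}
    [NormedAddCommGroup F] [InnerProductSpace ℝ F] (V₁ V₂ : Submodule ℝ F)
    [V₁.HasOrthogonalProjection] [V₂.HasOrthogonalProjection] :
    LinearMap.ker (((V₁.orthogonalProjectionOnto : F →ₗ[ℝ] V₁).prod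
      (V₂.orthogonalProjectionOnto : F →ₗ[ℝ] V₂)).comp (V₁ ⊔ V₂).subtype) = ⊥ := by
  simp [LinearMap.ker_comp, LinearMap.ker_prod, Submodule.inf_orthogonal,
    ← Submodule.disjoint_iff_comap_eq_bot, Submodule.orthogonal_disjoint]

theorem ker_innerₛₗ_comp_span_singleton_subtype {F : Type*}
    [NormedAddCommGroup F] [InnerProductSpace ℝ F] (a : F) :
    LinearMap.ker ((innerₛₗ ℝ a).comp (ℝ ∙ a).subtype) = ⊥ := by
  have : LinearMap.ker (innerₛₗ ℝ a) = (ℝ ∙ a)ᗮ := by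
    ext v; simp [Submodule.mem_orthogonal_singleton_iff_inner_right]
  rw [LinearMap.ker_comp, this, ← Submodule.disjoint_iff_comap_eq_bot]
  exact Submodule.orthogonal_disjoint _

section ResolventAlgebra

variable (F : Type*) [NormedAddCommGroup F] [InnerProductSpace ℝ F] [FiniteDimensional ℝ F]

def resolventGenerators : Set (F → ℝ) :=
  {f | ∃ (V : Submodule ℝ F) (g : V → ℝ), Continuous g ∧ Tendsto g (cocompact V) (𝓝 0) ∧
    f = fun x => g (V.orthogonalProjectionOnto x)}

variable {F}

theorem const_mem_resolventGenerators (c : ℝ) : (fun _ : F => c) ∈ resolventGenerators F :=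
  ⟨⊥, fun _ => c, continuous_const, by simp, rfl⟩

theorem mul_mem_resolventGenerators {f₁ f₂ : F → ℝ} (h₁ : f₁ ∈ resolventGenerators F)
    (h₂ : f₂ ∈ resolventGenerators F) : f₁ * f₂ ∈ resolventGenerators F := by
  obtain ⟨V₁, g₁, hg₁c, hg₁t, rfl⟩ := h₁
  obtain ⟨V₂, g₂, hg₂c, hg₂t, rfl⟩ := h₂
  let P : (V₁ ⊔ V₂ : Submodule ℝ F) →ₗ[ℝ] V₁ × V₂ :=
    ((V₁.orthogonalProjectionOnto : F →ₗ[ℝ] V₁).prod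
      (V₂.orthogonalProjectionOnto : F →ₗ[ℝ] V₂)).comp (V₁ ⊔ V₂).subtype
  have hP : Tendsto P (cocompact _) (cocompact _) :=
    (LinearMap.isClosedEmbedding_of_injective
      (Submodule.ker_orthogonalProjectionOnto_prod_comp_sup_subtype V₁ V₂)).tendsto_cocompact
  refine ⟨V₁ ⊔ V₂, fun w => g₁ (P w).1 * g₂ (P w).2, by fun_prop,
    (tendsto_mul_cocompact_prod hg₁c hg₁t hg₂c hg₂t).comp hP, ?_⟩
  ext x
  simp [P, Submodule.orthogonalProjectionOnto_starProjection_of_le]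

theorem comp_inner_add_mem_resolventGenerators {φ : ℝ → ℝ} (hφ : φ ∈ C0R) (a : F) (b : ℝ) :
    (fun x => φ (inner ℝ a x + b)) ∈ resolventGenerators F := by
  have hL : Tendsto ((innerₛₗ ℝ a).comp (ℝ ∙ a).subtype) (cocompact _) (cocompact ℝ) :=
    (LinearMap.isClosedEmbedding_of_injective
      (ker_innerₛₗ_comp_span_singleton_subtype a)).tendsto_cocompact
  have hφb : Tendsto (fun t => φ (t + b)) (cocompact ℝ) (𝓝 0) :=
    hφ.2.comp (Homeomorph.addRight b).isClosedEmbedding.tendsto_cocompact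
  refine ⟨ℝ ∙ a, fun v => φ (inner ℝ a (v : F) + b), hφ.1.comp (by fun_prop), hφb.comp hL, ?_⟩
  ext x
  have hPa := (ℝ ∙ a).starProjection_eq_self_iff.mpr (Submodule.mem_span_singleton_self a)
  simp [← Submodule.inner_starProjection_left_eq_right, hPa]

theorem exists_abs_le_of_mem_span_resolventGenerators {f : F → ℝ}
    (hf : f ∈ Submodule.span ℝ (resolventGenerators F)) : ∃ M, ∀ x, |f x| ≤ M := by
  induction hf using Submodule.span_induction with
  | mem f hf =>
    obtain ⟨V, g, hgc, hgt, rfl⟩ := hf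
    obtain ⟨M, hM⟩ := exists_abs_le_of_tendsto_cocompact hgc hgt
    exact ⟨M, fun x => hM _⟩
  | zero => exact ⟨0, by simp⟩
  | add f g _ _ hfM hgM =>
    obtain ⟨M, hM⟩ := hfM
    obtain ⟨N, hN⟩ := hgM
    exact ⟨M + N, fun x => (abs_add_le _ _).trans (add_le_add (hM x) (hN x))⟩
  | smul c f _ hfM =>
    obtain ⟨M, hM⟩ := hfM
    exact ⟨|c| * M, fun x => by
      simpa [abs_mul] using mul_le_mul_of_nonneg_left (hM x) (abs_nonneg c)⟩

theorem span_resolventGenerators_mul_le :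
    Submodule.span ℝ (resolventGenerators F) * Submodule.span ℝ (resolventGenerators F) ≤
      Submodule.span ℝ (resolventGenerators F) := by
  rw [Submodule.span_mul_span, Submodule.span_le]
  rintro _ ⟨f, hf, g, hg, rfl⟩
  exact Submodule.subset_span (mul_mem_resolventGenerators hf hg)

variable (F) in
def resolventSubalgebra : Subalgebra ℝ (F → ℝ) :=
  (Submodule.span ℝ (resolventGenerators F)).toSubalgebra
    (Submodule.subset_span (const_mem_resolventGenerators 1))
    (fun _ _ hf hg => span_resolventGenerators_mul_le (Submodule.mul_mem_mul hf hg))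

end ResolventAlgebra

theorem NN_subset_CR {φ : ℝ → ℝ} (hφ : φ ∈ C0R) (n l : ℕ) : NN φ n (l + 1) ⊆ CR n := by
  let C : Submodule ℝ (E n → ℝ) :=
    (Subalgebra.toSubmodule (resolventSubalgebra (E n))).unifClosure
  induction l with
  | zero =>
    refine SetLike.coe_subset_coe.mpr (Submodule.span_le (p := C).mpr ?_)
    rintro _ ⟨a, b, rfl⟩
    exact UnifClosure.subset _
      (Submodule.subset_span (comp_inner_add_mem_resolventGenerators hφ a b))
  | succ l ih =>
    refine SetLike.coe_subset_coe.mpr (Submodule.span_le (p := C).mpr ?_)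
    rintro _ ⟨g, hg, b, rfl⟩
    have hφu : UniformContinuous fun t => φ (t + b) :=
      (hφ.1.uniformContinuous_of_tendsto_cocompact hφ.2).comp
        (uniformContinuous_id.add uniformContinuous_const)
    exact UnifClosure.comp_mem (fun _ => exists_abs_le_of_mem_span_resolventGenerators) hφu (ih hg)

theorem stmt12_general (φ : ℝ → ℝ) (hφ : φ ∈ C0R) (n : ℕ) :
    NNinf φ n ⊆ CR n := by
  rintro f ⟨l, hl, hf⟩
  obtain ⟨k, rfl⟩ := Nat.exists_eq_add_of_le' hl
  exact NN_subset_CR hφ n k hf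

/-- For `φ ∈ C₀(ℝ)`, every neural network with activation `φ` and any number
of hidden layers belongs to the commutative resolvent algebra. -/
theorem stmt12 (φ : ℝ → ℝ) (hφ : φ ∈ C0R) (n : ℕ) (hn : 1 ≤ n) :
    NNinf φ n ⊆ CR n :=
  stmt12_general φ hφ n
end
end

section
/- Let φ ∈ S(ℝ). Then the sup-norm closure of N¹_φ(ℝ) is contained in S(ℝ). If moreover lim_{x→−∞} φ(x) ≠ lim_{x→∞} φ(x), then the sup-norm closure of N¹_φ(ℝ) equals S(ℝ). -/
/-!
Each generator `x ↦ φ (a x + b)` lies in `S(ℝ)`, a vector space closed under uniform limits,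
which gives the inclusion. For density, normalise `φ` to `σ = (φ - L₁) / (L₂ - L₁)`, which tends
to `0` at `-∞` and to `1` at `+∞`, so that for large `a` the function `σ (a ·)` is uniformly close
to the unit step away from a small neighbourhood of `0`. A function `f ∈ S(ℝ)` is uniformly
continuous and almost constant near `±∞`, hence uniformly close to a staircase on a fine
arithmetic grid whose jumps are all small. Replacing every step by `σ (a (· - tᵢ))` costs little:
at any `x`, at most one grid point is close to `x`, and the error of that single step is bounded
by the size of its jump.
-/

open Filter Topology MeasureTheory

noncomputable section

/-- `N¹_φ(ℝ)`: the linear span of the functions `x ↦ φ(a x + b)`. -/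
def N1R (φ : ℝ → ℝ) : Set (ℝ → ℝ) :=
  ↑(Submodule.span ℝ {f : ℝ → ℝ | ∃ a b : ℝ, f = fun x => φ (a * x + b)})

/-- `S(ℝ)`: continuous functions `ℝ → ℝ` with finite limits at both `−∞`
and `∞`. -/
def SR : Set (ℝ → ℝ) :=
  {f | Continuous f ∧ (∃ L : ℝ, Tendsto f atBot (𝓝 L)) ∧
    (∃ L : ℝ, Tendsto f atTop (𝓝 L))}

theorem unifClosure_mono_s16 {α : Type*} {S T : Set (α → ℝ)} (hST : S ⊆ T) :
    UnifClosure S ⊆ UnifClosure T := fun _ hf ε hε =>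
  let ⟨g, hg, hfg⟩ := hf ε hε
  ⟨g, hST hg, hfg⟩

theorem continuous_of_mem_unifClosure {α : Type*} [TopologicalSpace α] {S : Set (α → ℝ)}
    (hS : ∀ g ∈ S, Continuous g) {f : α → ℝ} (hf : f ∈ UnifClosure S) : Continuous f := by
  refine continuous_of_uniform_approx_of_continuous fun u hu => ?_
  obtain ⟨ε, hε, hεu⟩ := Metric.mem_uniformity_dist.1 hu
  obtain ⟨g, hg, hfg⟩ := hf (ε / 2) (half_pos hε)
  exact ⟨g, hS g hg, fun x => hεu ((hfg x).trans_lt (half_lt_self hε))⟩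

theorem exists_tendsto_of_mem_unifClosure {α : Type*} {l : Filter α} [l.NeBot]
    {S : Set (α → ℝ)} (hS : ∀ g ∈ S, ∃ L, Tendsto g l (𝓝 L)) {f : α → ℝ}
    (hf : f ∈ UnifClosure S) : ∃ L, Tendsto f l (𝓝 L) := by
  suffices Cauchy (map f l) from cauchy_map_iff_exists_tendsto.1 this
  refine Metric.cauchy_iff.2 ⟨map_neBot, fun ε hε => ?_⟩
  obtain ⟨g, hg, hfg⟩ := hf (ε / 4) (by positivity)
  obtain ⟨L, hL⟩ := hS g hg
  have hgL : ∀ᶠ x in l, |g x - L| < ε / 4 := by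
    simpa only [Real.dist_eq] using Metric.tendsto_nhds.1 hL (ε / 4) (by positivity)
  refine ⟨f '' {x | |g x - L| < ε / 4}, image_mem_map hgL, ?_⟩
  rintro _ ⟨x, hx : |g x - L| < ε / 4, rfl⟩ _ ⟨y, hy : |g y - L| < ε / 4, rfl⟩
  have hfx := abs_le.1 (hfg x)
  have hfy := abs_le.1 (hfg y)
  have hgx := abs_lt.1 hx
  have hgy := abs_lt.1 hy
  rw [Real.dist_eq, abs_lt]
  constructor <;> linarith

theorem unifClosure_SR_subset : UnifClosure SR ⊆ SR := fun _ hf =>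
  ⟨continuous_of_mem_unifClosure (fun _ hg => hg.1) hf,
    exists_tendsto_of_mem_unifClosure (fun _ hg => hg.2.1) hf,
    exists_tendsto_of_mem_unifClosure (fun _ hg => hg.2.2) hf⟩

namespace SR

def submodule : Submodule ℝ (ℝ → ℝ) where
  carrier := SR
  add_mem' := fun ⟨hf, ⟨A, hA⟩, ⟨B, hB⟩⟩ ⟨hg, ⟨A', hA'⟩, ⟨B', hB'⟩⟩ =>
    ⟨hf.add hg, ⟨A + A', hA.add hA'⟩, ⟨B + B', hB.add hB'⟩⟩
  zero_mem' := ⟨continuous_const, ⟨0, tendsto_const_nhds⟩, ⟨0, tendsto_const_nhds⟩⟩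
  smul_mem' c _ := fun ⟨hf, ⟨A, hA⟩, ⟨B, hB⟩⟩ =>
    ⟨hf.const_smul c, ⟨c * A, hA.const_mul c⟩, ⟨c * B, hB.const_mul c⟩⟩

theorem comp_affine {f : ℝ → ℝ} (hf : f ∈ SR) (a b : ℝ) : (fun x => f (a * x + b)) ∈ SR := by
  obtain ⟨hc, ⟨A, hA⟩, ⟨B, hB⟩⟩ := hf
  have hcont : Continuous fun x => f (a * x + b) := by fun_prop
  rcases lt_trichotomy a 0 with ha | rfl | ha
  · exact ⟨hcont,
      ⟨B, hB.comp (tendsto_atTop_add_const_right _ b (tendsto_id.const_mul_atBot_of_neg ha))⟩,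
      ⟨A, hA.comp (tendsto_atBot_add_const_right _ b (tendsto_id.const_mul_atTop_of_neg ha))⟩⟩
  · simp only [zero_mul, zero_add]
    exact ⟨continuous_const, ⟨f b, tendsto_const_nhds⟩, ⟨f b, tendsto_const_nhds⟩⟩
  · exact ⟨hcont,
      ⟨A, hA.comp (tendsto_atBot_add_const_right _ b (tendsto_id.const_mul_atBot ha))⟩,
      ⟨B, hB.comp (tendsto_atTop_add_const_right _ b (tendsto_id.const_mul_atTop ha))⟩⟩

end SR

theorem N1R_subset_SR {φ : ℝ → ℝ} (hφ : φ ∈ SR) : N1R φ ⊆ SR :=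
  Submodule.span_le (p := SR.submodule).2 fun _ ⟨a, b, hab⟩ => hab ▸ SR.comp_affine hφ a b

def ramp (x : ℝ) : ℝ := max 0 (min 1 x)

theorem lipschitzWith_ramp : LipschitzWith 1 ramp :=
  (LipschitzWith.id.const_min 1).const_max 0

theorem abs_ramp_le_one (x : ℝ) : |ramp x| ≤ 1 := by
  unfold ramp
  rw [abs_le]
  constructor <;> simp only [le_max_iff, max_le_iff, min_le_iff] <;> norm_num

theorem tendsto_ramp_atBot : Tendsto ramp atBot (𝓝 0) :=
  tendsto_const_nhds.congr' <| (eventually_le_atBot 0).mono fun x hx => by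
    simp [ramp, min_eq_right (hx.trans zero_le_one), hx]

theorem tendsto_ramp_atTop : Tendsto ramp atTop (𝓝 1) :=
  tendsto_const_nhds.congr' <| (eventually_ge_atTop 1).mono fun x hx => by
    simp [ramp, hx]

namespace SR

theorem exists_sub_ramp_mem_C0R {f : ℝ → ℝ} (hf : f ∈ SR) :
    ∃ A B : ℝ, (fun x => f x - (A + (B - A) * ramp x)) ∈ C0R := by
  obtain ⟨hc, ⟨A, hA⟩, ⟨B, hB⟩⟩ := hf
  refine ⟨A, B, hc.sub (continuous_const.add
    (continuous_const.mul lipschitzWith_ramp.continuous)), ?_⟩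
  rw [cocompact_eq_atBot_atTop, tendsto_sup]
  constructor
  · simpa using hA.sub ((tendsto_ramp_atBot.const_mul (B - A)).const_add A)
  · simpa using hB.sub ((tendsto_ramp_atTop.const_mul (B - A)).const_add A)

theorem uniformContinuous {f : ℝ → ℝ} (hf : f ∈ SR) : UniformContinuous f := by
  obtain ⟨A, B, hg, hg0⟩ := exists_sub_ramp_mem_C0R hf
  have hramp : UniformContinuous fun x => A + (B - A) * ramp x :=
    uniformContinuous_const.add (lipschitzWith_ramp.uniformContinuous.const_mul' (B - A))
  simpa using (hg.uniformContinuous_of_tendsto_cocompact hg0).add hramp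

theorem exists_abs_le {f : ℝ → ℝ} (hf : f ∈ SR) : ∃ M, ∀ x, |f x| ≤ M := by
  obtain ⟨A, B, hg, hg0⟩ := exists_sub_ramp_mem_C0R hf
  obtain ⟨C, hC⟩ := isBounded_iff_forall_norm_le.1
    (ZeroAtInftyContinuousMap.isBounded_range ⟨⟨_, hg⟩, hg0⟩)
  refine ⟨C + |A| + |B - A|, fun x => ?_⟩
  have hgx : |f x - (A + (B - A) * ramp x)| ≤ C := hC _ ⟨x, rfl⟩
  have hrx : |(B - A) * ramp x| ≤ |B - A| := by
    simpa [abs_mul] using mul_le_mul_of_nonneg_left (abs_ramp_le_one x) (abs_nonneg (B - A))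
  calc |f x| = |(f x - (A + (B - A) * ramp x)) + A + (B - A) * ramp x| := by ring_nf
    _ ≤ |f x - (A + (B - A) * ramp x)| + |A| + |(B - A) * ramp x| := abs_add_three _ _ _
    _ ≤ C + |A| + |B - A| := by gcongr

end SR

def heaviside (y : ℝ) : ℝ := if 0 ≤ y then 1 else 0

theorem heaviside_of_nonneg {y : ℝ} (hy : 0 ≤ y) : heaviside y = 1 := if_pos hy

theorem heaviside_of_neg {y : ℝ} (hy : y < 0) : heaviside y = 0 := if_neg hy.not_ge

theorem abs_heaviside_le_one (y : ℝ) : |heaviside y| ≤ 1 := by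
  unfold heaviside; split_ifs <;> norm_num

theorem exists_abs_comp_mul_sub_heaviside_le {σ : ℝ → ℝ} (h0 : Tendsto σ atBot (𝓝 0))
    (h1 : Tendsto σ atTop (𝓝 1)) {ε η : ℝ} (hε : 0 < ε) (hη : 0 < η) :
    ∃ a, ∀ y, η ≤ |y| → |σ (a * y) - heaviside y| ≤ ε := by
  obtain ⟨T₀, hT₀⟩ := eventually_atBot.1 (Metric.tendsto_nhds.1 h0 ε hε)
  obtain ⟨T₁, hT₁⟩ := eventually_atTop.1 (Metric.tendsto_nhds.1 h1 ε hε)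
  set a := (|T₀| + |T₁|) / η
  have haη : a * η = |T₀| + |T₁| := div_mul_cancel₀ _ hη.ne'
  have ha : 0 ≤ a := by positivity
  refine ⟨a, fun y hy => ?_⟩
  rcases le_or_gt 0 y with hy0 | hy0
  · rw [abs_of_nonneg hy0] at hy
    rw [heaviside_of_nonneg hy0, ← Real.dist_eq]
    refine (hT₁ _ ?_).le
    nlinarith [le_abs_self T₁, abs_nonneg T₀]
  · rw [abs_of_neg hy0] at hy
    rw [heaviside_of_neg hy0, sub_zero, ← sub_zero (σ _), ← Real.dist_eq]
    refine (hT₀ _ ?_).le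
    nlinarith [neg_abs_le T₀, abs_nonneg T₁]

def staircase (f : ℝ → ℝ) (t : ℕ → ℝ) (n : ℕ) (x : ℝ) : ℝ :=
  f (t 0) + ∑ i ∈ Finset.range n, (f (t (i + 1)) - f (t i)) * heaviside (x - t (i + 1))

theorem staircase_eq {f : ℝ → ℝ} {t : ℕ → ℝ} {n j : ℕ} {x : ℝ} (hj : j ≤ n)
    (hlo : ∀ i < j, t (i + 1) ≤ x) (hhi : ∀ i, j ≤ i → i < n → x < t (i + 1)) :
    staircase f t n x = f (t j) := by
  have hbelow : ∑ i ∈ Finset.range j, (f (t (i + 1)) - f (t i)) * heaviside (x - t (i + 1)) =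
      ∑ i ∈ Finset.range j, (f (t (i + 1)) - f (t i)) :=
    Finset.sum_congr rfl fun i hi => by
      rw [heaviside_of_nonneg (sub_nonneg.2 (hlo i (Finset.mem_range.1 hi))), mul_one]
  have habove : ∑ i ∈ Finset.Ico j n, (f (t (i + 1)) - f (t i)) * heaviside (x - t (i + 1)) = 0 :=
    Finset.sum_eq_zero fun i hi => by
      obtain ⟨hji, hin⟩ := Finset.mem_Ico.1 hi
      rw [heaviside_of_neg (sub_neg.2 (hhi i hji hin)), mul_zero]
  rw [staircase, ← Finset.sum_range_add_sum_Ico _ hj, hbelow, habove,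
    Finset.sum_range_sub (fun i => f (t i))]
  ring

theorem staircase_grid_eq (f : ℝ → ℝ) {t₀ h : ℝ} (hh : 0 < h) (n : ℕ) (x : ℝ) :
    staircase f (fun i => t₀ + i * h) n x = f (t₀ + (min n ⌊(x - t₀) / h⌋₊ : ℕ) * h) := by
  refine staircase_eq (min_le_left _ _) (fun i hi => ?_) (fun i hji hin => ?_)
  · have hi' : ((i + 1 : ℕ) : ℝ) ≤ (x - t₀) / h :=
      (Nat.le_floor_iff' i.succ_ne_zero).1 (lt_min_iff.1 hi).2
    rw [le_div_iff₀ hh] at hi'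
    linarith
  · have hji' : ⌊(x - t₀) / h⌋₊ ≤ i := by
      rcases min_choice n ⌊(x - t₀) / h⌋₊ with hmin | hmin <;> rw [hmin] at hji <;> omega
    have hlt : (x - t₀) / h < ((i + 1 : ℕ) : ℝ) := by
      push_cast
      linarith [Nat.lt_floor_add_one ((x - t₀) / h), (Nat.cast_le (α := ℝ)).2 hji']
    rw [div_lt_iff₀ hh] at hlt
    linarith

theorem exists_forall_ne_half_le_abs_sub_grid {h : ℝ} (hh : 0 < h) (t₀ x : ℝ) :
    ∃ i₀ : ℕ, ∀ i : ℕ, i ≠ i₀ → h / 2 ≤ |x - (t₀ + i * h)| := by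
  by_cases hnear : ∃ i₀ : ℕ, |x - (t₀ + i₀ * h)| < h / 2
  · obtain ⟨i₀, hi₀⟩ := hnear
    refine ⟨i₀, fun i hne => le_of_not_gt fun hi => hne ?_⟩
    obtain ⟨hi₁, hi₂⟩ := abs_lt.1 hi
    obtain ⟨hi₀₁, hi₀₂⟩ := abs_lt.1 hi₀
    have hlt : (i : ℝ) < i₀ + 1 := by nlinarith
    have hgt : (i₀ : ℝ) < i + 1 := by nlinarith
    have hlt' : i < i₀ + 1 := by exact_mod_cast hlt
    have hgt' : i₀ < i + 1 := by exact_mod_cast hgt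
    omega
  · simp only [not_exists, not_lt] at hnear
    exact ⟨0, fun i _ => hnear i⟩

theorem SR.exists_staircase_approx {f : ℝ → ℝ} (hf : f ∈ SR) {ε : ℝ} (hε : 0 < ε) :
    ∃ t₀ h : ℝ, ∃ n : ℕ, 0 < h ∧ (∀ y z, |y - z| ≤ h → |f y - f z| ≤ ε) ∧
      ∀ x, |f x - staircase f (fun i => t₀ + i * h) n x| ≤ ε := by
  obtain ⟨δ, hδ, hfδ⟩ := Metric.uniformContinuous_iff.1 (SR.uniformContinuous hf) ε hε
  obtain ⟨-, ⟨A, hA⟩, ⟨B, hB⟩⟩ := hf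
  obtain ⟨s₀, hs₀, hfs₀⟩ := (Metric.cauchy_iff.1 hA.cauchy_map).2 ε hε
  obtain ⟨s₁, hs₁, hfs₁⟩ := (Metric.cauchy_iff.1 hB.cauchy_map).2 ε hε
  obtain ⟨R₀, hR₀⟩ := mem_atBot_sets.1 hs₀
  obtain ⟨R₁, hR₁⟩ := mem_atTop_sets.1 hs₁
  set R := max 1 (max (-R₀) R₁)
  have hR : 0 < R := zero_lt_one.trans_le (le_max_left _ _)
  have hR₀R : -R ≤ R₀ := by linarith [le_max_right 1 (max (-R₀) R₁), le_max_left (-R₀) R₁]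
  have hR₁R : R₁ ≤ R := (le_max_right _ _).trans (le_max_right _ _)
  have hbot : ∀ y z, y ≤ -R → z ≤ -R → |f y - f z| ≤ ε := fun y z hy hz =>
    (hfs₀ _ (hR₀ y (hy.trans hR₀R)) _ (hR₀ z (hz.trans hR₀R))).le
  have htop : ∀ y z, R ≤ y → R ≤ z → |f y - f z| ≤ ε := fun y z hy hz =>
    (hfs₁ _ (hR₁ y (hR₁R.trans hy)) _ (hR₁ z (hR₁R.trans hz))).le
  obtain ⟨n, hn⟩ := exists_nat_gt (2 * R / δ)
  have hn0 : (0 : ℝ) < n := (by positivity : 0 < 2 * R / δ).trans hn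
  set h := 2 * R / n
  have hh : 0 < h := by positivity
  have hhδ : h < δ := (div_lt_iff₀ hn0).2 (by linarith [(div_lt_iff₀ hδ).1 hn])
  have hnh : n * h = 2 * R := mul_div_cancel₀ _ hn0.ne'
  have hmod : ∀ y z, |y - z| ≤ h → |f y - f z| ≤ ε := fun y z hyz =>
    (hfδ (by rw [Real.dist_eq]; exact hyz.trans_lt hhδ)).le
  refine ⟨-R, h, n, hh, hmod, fun x => ?_⟩
  rw [staircase_grid_eq f hh, sub_neg_eq_add]
  rcases lt_or_ge x (-R) with hxR | hxR
  · rw [Nat.floor_of_nonpos (div_nonpos_of_nonpos_of_nonneg (by linarith) hh.le)]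
    simpa using hbot x (-R) hxR.le le_rfl
  rcases le_or_gt R x with hRx | hRx
  · have hfl : n ≤ ⌊(x + R) / h⌋₊ := Nat.le_floor <| by rw [le_div_iff₀ hh]; linarith
    rw [min_eq_left hfl, hnh]
    exact htop x (-R + 2 * R) hRx (by linarith)
  · have hu : 0 ≤ (x + R) / h := div_nonneg (by linarith) hh.le
    have hfl : ⌊(x + R) / h⌋₊ ≤ n :=
      (Nat.floor_lt hu).2 (by rw [div_lt_iff₀ hh]; linarith) |>.le
    rw [min_eq_right hfl]
    apply hmod
    have h₁ := (le_div_iff₀ hh).1 (Nat.floor_le hu)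
    have h₂ := (div_lt_iff₀ hh).1 (Nat.lt_floor_add_one ((x + R) / h))
    rw [abs_le]
    constructor <;> linarith

theorem abs_sum_mul_le_of_forall_ne {ι : Type*} [DecidableEq ι] {s : Finset ι} {c e : ι → ℝ}
    {i₀ : ι} {ε B : ℝ} (hε : 0 ≤ ε) (hfar : ∀ i ∈ s, i ≠ i₀ → |e i| ≤ ε) (hB : |e i₀| ≤ B) :
    |∑ i ∈ s, c i * e i| ≤ ε * ∑ i ∈ s, |c i| + |c i₀| * B := by
  have hB0 : 0 ≤ |c i₀| * B := mul_nonneg (abs_nonneg _) ((abs_nonneg _).trans hB)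
  have hterm : ∀ i ∈ s, |c i * e i| ≤ ε * |c i| + if i = i₀ then |c i₀| * B else 0 := by
    intro i hi
    rw [abs_mul]
    split_ifs with hi₀
    · subst hi₀
      nlinarith [abs_nonneg (c i)]
    · rw [add_zero, mul_comm ε]
      exact mul_le_mul_of_nonneg_left (hfar i hi hi₀) (abs_nonneg _)
  calc |∑ i ∈ s, c i * e i| ≤ ∑ i ∈ s, |c i * e i| := Finset.abs_sum_le_sum_abs _ _
    _ ≤ ∑ i ∈ s, (ε * |c i| + if i = i₀ then |c i₀| * B else 0) := Finset.sum_le_sum hterm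
    _ ≤ ε * ∑ i ∈ s, |c i| + |c i₀| * B := by
      rw [Finset.sum_add_distrib, ← Finset.mul_sum, Finset.sum_ite_eq']
      gcongr
      split_ifs
      exacts [le_rfl, hB0]

def smoothedStaircase (σ : ℝ → ℝ) (a : ℝ) (f : ℝ → ℝ) (t : ℕ → ℝ) (n : ℕ) (x : ℝ) : ℝ :=
  f (t 0) + ∑ i ∈ Finset.range n, (f (t (i + 1)) - f (t i)) * σ (a * (x - t (i + 1)))

theorem smoothedStaircase_mem {V : Submodule ℝ (ℝ → ℝ)} {σ : ℝ → ℝ}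
    (hconst : ∀ c : ℝ, (fun _ => c) ∈ V) (hσV : ∀ a b, (fun x => σ (a * x + b)) ∈ V)
    (a : ℝ) (f : ℝ → ℝ) (t : ℕ → ℝ) (n : ℕ) : smoothedStaircase σ a f t n ∈ V := by
  have heq : smoothedStaircase σ a f t n = (fun _ => f (t 0)) +
      ∑ i ∈ Finset.range n, (f (t (i + 1)) - f (t i)) • fun x => σ (a * x + -(a * t (i + 1))) := by
    ext x
    simp only [smoothedStaircase, Pi.add_apply, Finset.sum_apply, Pi.smul_apply, smul_eq_mul,
      mul_sub]
    simp only [sub_eq_add_neg]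
  rw [heq]
  exact V.add_mem (hconst _) (V.sum_mem fun i _ => V.smul_mem _ (hσV _ _))

theorem abs_staircase_sub_smoothedStaircase_le {σ f : ℝ → ℝ} {t₀ h a ε κ M : ℝ} (hh : 0 < h)
    (hε : 0 ≤ ε) (hσM : ∀ y, |σ y| ≤ M)
    (ha : ∀ y, h / 2 ≤ |y| → |σ (a * y) - heaviside y| ≤ ε)
    (hκ : ∀ y z, |y - z| ≤ h → |f y - f z| ≤ κ) (n : ℕ) (x : ℝ) :
    let t : ℕ → ℝ := fun i => t₀ + i * h
    |staircase f t n x - smoothedStaircase σ a f t n x| ≤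
      ε * ∑ i ∈ Finset.range n, |f (t (i + 1)) - f (t i)| + κ * (M + 1) := by
  intro t
  set e : ℕ → ℝ := fun i => heaviside (x - t (i + 1)) - σ (a * (x - t (i + 1)))
  have hsum : staircase f t n x - smoothedStaircase σ a f t n x =
      ∑ i ∈ Finset.range n, (f (t (i + 1)) - f (t i)) * e i := by
    simp only [staircase, smoothedStaircase, e, mul_sub, Finset.sum_sub_distrib]
    ring
  obtain ⟨i₀, hi₀⟩ := exists_forall_ne_half_le_abs_sub_grid hh (t₀ + h) x
  have hfar : ∀ i ∈ Finset.range n, i ≠ i₀ → |e i| ≤ ε := fun i _ hi => by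
    rw [abs_sub_comm]
    refine ha _ ((hi₀ i hi).trans_eq ?_)
    simp only [t]; push_cast; ring_nf
  have hnear : |e i₀| ≤ M + 1 := (abs_sub _ _).trans <| by
    linarith [abs_heaviside_le_one (x - t (i₀ + 1)), hσM (a * (x - t (i₀ + 1)))]
  have hc : |f (t (i₀ + 1)) - f (t i₀)| ≤ κ := hκ _ _ <| by
    simp only [t]; push_cast; rw [abs_of_nonneg] <;> linarith
  rw [hsum]
  refine (abs_sum_mul_le_of_forall_ne hε hfar hnear).trans ?_
  gcongr
  linarith [abs_nonneg (e i₀)]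

theorem SR_subset_unifClosure_of_tendsto {V : Submodule ℝ (ℝ → ℝ)} {σ : ℝ → ℝ} {M : ℝ}
    (hconst : ∀ c : ℝ, (fun _ => c) ∈ V) (hσV : ∀ a b, (fun x => σ (a * x + b)) ∈ V)
    (hσM : ∀ y, |σ y| ≤ M) (h0 : Tendsto σ atBot (𝓝 0)) (h1 : Tendsto σ atTop (𝓝 1)) :
    SR ⊆ UnifClosure V := by
  intro f hf ε hε
  have hM : 0 ≤ M := (abs_nonneg _).trans (hσM 0)
  set ε₀ := ε / (M + 3)
  have hε₀ : 0 < ε₀ := by positivity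
  obtain ⟨t₀, h, n, hh, hmod, hstair⟩ := SR.exists_staircase_approx hf hε₀
  set K := ∑ i ∈ Finset.range n, |f (t₀ + (i + 1 : ℕ) * h) - f (t₀ + i * h)|
  have hK : 0 ≤ K := Finset.sum_nonneg fun i _ => abs_nonneg _
  obtain ⟨a, ha⟩ := exists_abs_comp_mul_sub_heaviside_le h0 h1
    (by positivity : 0 < ε₀ / (K + 1)) (half_pos hh)
  refine ⟨_, smoothedStaircase_mem hconst hσV a f (fun i => t₀ + i * h) n, fun x => ?_⟩
  have hKε : ε₀ / (K + 1) * K ≤ ε₀ := by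
    rw [div_mul_eq_mul_div, div_le_iff₀ (by positivity)]; nlinarith
  calc _ ≤ |f x - staircase f _ n x| + |staircase f _ n x - smoothedStaircase σ a f _ n x| :=
        abs_sub_le _ _ _
    _ ≤ ε₀ + (ε₀ / (K + 1) * K + ε₀ * (M + 1)) := add_le_add (hstair x)
        (abs_staircase_sub_smoothedStaircase_le hh (by positivity) hσM ha hmod n x)
    _ ≤ ε := by
      rw [show ε = ε₀ * (M + 3) by simp only [ε₀]; field_simp]
      nlinarith

theorem const_mem_N1R {φ : ℝ → ℝ} (hφ : ∃ b, φ b ≠ 0) (c : ℝ) : (fun _ => c) ∈ N1R φ := by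
  obtain ⟨b, hb⟩ := hφ
  have hmem : (fun x => φ (0 * x + b)) ∈ N1R φ := Submodule.subset_span ⟨0, b, rfl⟩
  show _ ∈ Submodule.span ℝ _
  convert Submodule.smul_mem _ (c / φ b) hmem using 1
  ext x
  simp [hb]

theorem sub_div_comp_affine_mem_N1R {φ : ℝ → ℝ} (hφ : ∃ b, φ b ≠ 0) (L D a b : ℝ) :
    (fun x => (φ (a * x + b) - L) / D) ∈ N1R φ := by
  have hmem : (fun x => φ (a * x + b)) ∈ N1R φ := Submodule.subset_span ⟨a, b, rfl⟩
  show _ ∈ Submodule.span ℝ _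
  convert Submodule.add_mem _ (Submodule.smul_mem _ D⁻¹ hmem) (const_mem_N1R hφ (-L / D))
    using 1
  ext x
  simp only [Pi.add_apply, Pi.smul_apply, smul_eq_mul]
  ring

theorem SR_subset_unifClosure_N1R {φ : ℝ → ℝ} (hφ : φ ∈ SR) {L₁ L₂ : ℝ}
    (hL₁ : Tendsto φ atBot (𝓝 L₁)) (hL₂ : Tendsto φ atTop (𝓝 L₂)) (hne : L₁ ≠ L₂) :
    SR ⊆ UnifClosure (N1R φ) := by
  have hD : L₂ - L₁ ≠ 0 := sub_ne_zero.2 hne.symm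
  have hφ0 : ∃ b, φ b ≠ 0 := by
    by_contra! hzero
    have hφ_eq : φ = fun _ => 0 := funext hzero
    exact hne ((tendsto_nhds_unique hL₁ (hφ_eq ▸ tendsto_const_nhds)).trans
      (tendsto_nhds_unique hL₂ (hφ_eq ▸ tendsto_const_nhds)).symm)
  set σ := fun y => (φ y - L₁) / (L₂ - L₁)
  have h0 : Tendsto σ atBot (𝓝 0) := by simpa using (hL₁.sub_const L₁).div_const (L₂ - L₁)
  have h1 : Tendsto σ atTop (𝓝 1) := by simpa [hD] using (hL₂.sub_const L₁).div_const (L₂ - L₁)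
  obtain ⟨M, hM⟩ := SR.exists_abs_le
    (⟨(hφ.1.sub continuous_const).div_const _, ⟨0, h0⟩, ⟨1, h1⟩⟩ : σ ∈ SR)
  exact SR_subset_unifClosure_of_tendsto (V := Submodule.span ℝ _) (σ := σ) (const_mem_N1R hφ0)
    (sub_div_comp_affine_mem_N1R hφ0 L₁ (L₂ - L₁)) hM h0 h1

/-- For `φ ∈ S(ℝ)`, the uniform closure of `N¹_φ(ℝ)` is contained in `S(ℝ)`;
if moreover the limits of `φ` at `−∞` and `∞` differ, then it equals `S(ℝ)`. -/
theorem stmt16 (φ : ℝ → ℝ) (hφ : φ ∈ SR) :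
    UnifClosure (N1R φ) ⊆ SR ∧
    ((∃ L₁ L₂ : ℝ, Tendsto φ atBot (𝓝 L₁) ∧ Tendsto φ atTop (𝓝 L₂) ∧ L₁ ≠ L₂) →
      UnifClosure (N1R φ) = SR) := by
  have hsub : UnifClosure (N1R φ) ⊆ SR :=
    (unifClosure_mono_s16 (N1R_subset_SR hφ)).trans unifClosure_SR_subset
  refine ⟨hsub, fun ⟨L₁, L₂, hL₁, hL₂, hne⟩ => ?_⟩
  exact hsub.antisymm (SR_subset_unifClosure_N1R hφ hL₁ hL₂ hne)
end
end

section
/- Let φ ∈ S(ℝ) with lim_{x→−∞} φ(x) ≠ lim_{x→∞} φ(x). Let h : ℝ → ℝ be a continuous function with finite limits at ±∞ satisfying h(x) = 0 for all x ≤ 0 and h(x) = 1 for all x ≥ 1, and define f : ℝ² → ℝ by f(x,y) := h(x)h(y). Then for every one-layer network g ∈ N¹_φ(ℝ²) one has sup_{(x,y)∈ℝ²} |f(x,y) − g(x,y)| ≥ 1/4. -/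
open Filter Topology MeasureTheory

noncomputable section

/-!
Along the parabolic rays `t ↦ (σ t, τ t²)`, `σ, τ = ±1`, the quadratic term dominates, so a ridge
function `φ (a₀ x + a₁ y + b)` has a limit that depends only on `τ` when `a₁ ≠ 0` and only on `σ`
when `a₁ = 0`. Either way the mixed difference `A(1,1) - A(1,-1) - A(-1,1) + A(-1,-1)` of the four
limits vanishes, and by linearity it vanishes for every `g ∈ N¹_φ(ℝ²)`. For `f` the four limits are
`1, 0, 0, 0`, so the mixed difference of the limits of `f - g` is `1`, and one of these four limits
has absolute value at least `1/4`.
-/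

def limitBySign (L₁ L₂ v c : ℝ) : ℝ :=
  if 0 < c then L₂ else if c < 0 then L₁ else v

theorem limitBySign_mixed_sub_eq_zero (L₁ L₂ v x y : ℝ) :
    limitBySign L₁ L₂ (limitBySign L₁ L₂ v x) y - limitBySign L₁ L₂ (limitBySign L₁ L₂ v x) (-y)
      - limitBySign L₁ L₂ (limitBySign L₁ L₂ v (-x)) y
      + limitBySign L₁ L₂ (limitBySign L₁ L₂ v (-x)) (-y) = 0 := by
  simp only [limitBySign]
  split_ifs <;> first | (exfalso; linarith) | ring

section

variable {φ : ℝ → ℝ} {L₁ L₂ : ℝ}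

theorem tendsto_comp_limitBySign {α : Type*} {l : Filter α} {p : α → ℝ} {c v : ℝ}
    (hφ₁ : Tendsto φ atBot (𝓝 L₁)) (hφ₂ : Tendsto φ atTop (𝓝 L₂))
    (hpos : 0 < c → Tendsto p l atTop) (hneg : c < 0 → Tendsto p l atBot)
    (hzero : c = 0 → Tendsto (fun x => φ (p x)) l (𝓝 v)) :
    Tendsto (fun x => φ (p x)) l (𝓝 (limitBySign L₁ L₂ v c)) := by
  rcases lt_trichotomy c 0 with hc | rfl | hc
  · rw [show limitBySign L₁ L₂ v c = L₁ by simp [limitBySign, hc, hc.not_gt]]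
    exact hφ₁.comp (hneg hc)
  · simpa [limitBySign] using hzero rfl
  · rw [show limitBySign L₁ L₂ v c = L₂ by simp [limitBySign, hc]]
    exact hφ₂.comp (hpos hc)

theorem tendsto_affine_atTop {c : ℝ} (hc : 0 < c) (b : ℝ) :
    Tendsto (fun t : ℝ => c * t + b) atTop atTop :=
  tendsto_atTop_add_const_right _ b (tendsto_id.const_mul_atTop hc)

theorem tendsto_affine_atBot {c : ℝ} (hc : c < 0) (b : ℝ) :
    Tendsto (fun t : ℝ => c * t + b) atTop atBot :=
  tendsto_atBot_add_const_right _ b (tendsto_id.const_mul_atTop_of_neg hc)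

theorem tendsto_comp_affine (hφ₁ : Tendsto φ atBot (𝓝 L₁)) (hφ₂ : Tendsto φ atTop (𝓝 L₂))
    (c b : ℝ) :
    Tendsto (fun t => φ (c * t + b)) atTop (𝓝 (limitBySign L₁ L₂ (φ b) c)) :=
  tendsto_comp_limitBySign hφ₁ hφ₂ (tendsto_affine_atTop · b) (tendsto_affine_atBot · b)
    fun hc => by simp [hc]

theorem tendsto_comp_quadratic (hφ₁ : Tendsto φ atBot (𝓝 L₁)) (hφ₂ : Tendsto φ atTop (𝓝 L₂))
    (c₂ c₁ b : ℝ) :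
    Tendsto (fun t => φ (c₂ * t ^ 2 + c₁ * t + b)) atTop
      (𝓝 (limitBySign L₁ L₂ (limitBySign L₁ L₂ (φ b) c₁) c₂)) := by
  have hfactor : (fun t : ℝ => c₂ * t ^ 2 + c₁ * t + b) = fun t => t * (c₂ * t + c₁) + b := by
    funext t; ring
  refine tendsto_comp_limitBySign hφ₁ hφ₂ (fun hc => ?_) (fun hc => ?_) (fun hc => ?_)
  · rw [hfactor]
    exact tendsto_atTop_add_const_right _ b
      (tendsto_id.atTop_mul_atTop₀ (tendsto_affine_atTop hc c₁))
  · rw [hfactor]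
    exact tendsto_atBot_add_const_right _ b
      (tendsto_id.atTop_mul_atBot₀ (tendsto_affine_atBot hc c₁))
  · simpa [hc] using tendsto_comp_affine hφ₁ hφ₂ c₁ b

def parabolaPath (σ τ t : ℝ) : E 2 := !₂[σ * t, τ * t ^ 2]

theorem inner_parabolaPath (a : E 2) (σ τ t : ℝ) :
    inner ℝ a (parabolaPath σ τ t) = τ * a 1 * t ^ 2 + σ * a 0 * t := by
  simp [parabolaPath, PiLp.inner_apply, Fin.sum_univ_two]
  ring

def parabolicMixedLimitZero : Submodule ℝ (E 2 → ℝ) where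
  carrier := {g | ∃ A : ℝ → ℝ → ℝ,
    (∀ σ τ, Tendsto (fun t => g (parabolaPath σ τ t)) atTop (𝓝 (A σ τ))) ∧
      A 1 1 - A 1 (-1) - A (-1) 1 + A (-1) (-1) = 0}
  zero_mem' := ⟨0, fun _ _ => tendsto_const_nhds, by simp⟩
  add_mem' := by
    rintro g g' ⟨A, hA, hmix⟩ ⟨A', hA', hmix'⟩
    exact ⟨A + A', fun σ τ => (hA σ τ).add (hA' σ τ), by simp only [Pi.add_apply]; linarith⟩
  smul_mem' := by
    rintro c g ⟨A, hA, hmix⟩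
    exact ⟨c • A, fun σ τ => (hA σ τ).const_smul c, by
      simp only [Pi.smul_apply, smul_eq_mul]; linear_combination c * hmix⟩

theorem ridge_mem_parabolicMixedLimitZero
    (hφ₁ : Tendsto φ atBot (𝓝 L₁)) (hφ₂ : Tendsto φ atTop (𝓝 L₂)) (a : E 2) (b : ℝ) :
    (fun x => φ (inner ℝ a x + b)) ∈ parabolicMixedLimitZero := by
  refine ⟨fun σ τ => limitBySign L₁ L₂ (limitBySign L₁ L₂ (φ b) (σ * a 0)) (τ * a 1),
    fun σ τ => ?_, ?_⟩
  · simpa only [inner_parabolaPath] using tendsto_comp_quadratic hφ₁ hφ₂ _ _ b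
  · simpa using limitBySign_mixed_sub_eq_zero L₁ L₂ (φ b) (a 0) (a 1)

theorem NN_one_subset_parabolicMixedLimitZero
    (hφ₁ : Tendsto φ atBot (𝓝 L₁)) (hφ₂ : Tendsto φ atTop (𝓝 L₂)) :
    NN φ 2 1 ⊆ parabolicMixedLimitZero :=
  Submodule.span_le.mpr fun _ ⟨a, b, hg⟩ => hg ▸ ridge_mem_parabolicMixedLimitZero hφ₁ hφ₂ a b

end

theorem ofReal_abs_sub_le_iSup_of_tendsto {X α : Type*} {l : Filter α} [l.NeBot]
    {f g : X → ℝ} {γ : α → X} {c d : ℝ}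
    (hf : Tendsto (fun t => f (γ t)) l (𝓝 c)) (hg : Tendsto (fun t => g (γ t)) l (𝓝 d)) :
    ENNReal.ofReal |c - d| ≤ ⨆ x, ENNReal.ofReal |f x - g x| :=
  le_of_tendsto ((ENNReal.continuous_ofReal.tendsto _).comp (hf.sub hg).abs)
    (Eventually.of_forall fun t => le_iSup (fun x => ENNReal.ofReal |f x - g x|) (γ t))

theorem quarter_le_abs_of_sub_sub_add_eq_one {a b c d : ℝ} (h : a - b - c + d = 1) :
    1 / 4 ≤ |a| ∨ 1 / 4 ≤ |b| ∨ 1 / 4 ≤ |c| ∨ 1 / 4 ≤ |d| := by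
  by_contra! hlt
  obtain ⟨ha, hb, hc, hd⟩ := hlt
  linarith [abs_lt.mp ha, abs_lt.mp hb, abs_lt.mp hc, abs_lt.mp hd]

theorem tendsto_step_mul_step_parabola {h : ℝ → ℝ} (hh1 : ∀ x : ℝ, 1 ≤ x → h x = 1) :
    Tendsto (fun t => h (1 * t) * h (1 * t ^ 2)) atTop (𝓝 1) :=
  tendsto_const_nhds.congr' <| (eventually_ge_atTop 1).mono fun t ht => by
    dsimp only
    rw [hh1 (1 * t) (by linarith), hh1 (1 * t ^ 2) (by nlinarith), mul_one]

theorem tendsto_step_mul_step_neg_parabola {h : ℝ → ℝ} (hh0 : ∀ x : ℝ, x ≤ 0 → h x = 0)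
    (σ : ℝ) : Tendsto (fun t => h (σ * t) * h (-1 * t ^ 2)) atTop (𝓝 0) :=
  tendsto_const_nhds.congr fun t => by
    rw [hh0 (-1 * t ^ 2) (by nlinarith), mul_zero]

theorem tendsto_step_neg_mul_step_parabola {h : ℝ → ℝ} (hh0 : ∀ x : ℝ, x ≤ 0 → h x = 0)
    (τ : ℝ) : Tendsto (fun t => h (-1 * t) * h (τ * t ^ 2)) atTop (𝓝 0) :=
  tendsto_const_nhds.congr' <| (eventually_ge_atTop 0).mono fun t ht => by
    dsimp only
    rw [hh0 (-1 * t) (by linarith), zero_mul]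

theorem stmt18_general (φ : ℝ → ℝ)
    (L₁ L₂ : ℝ) (hφ₁ : Tendsto φ atBot (𝓝 L₁)) (hφ₂ : Tendsto φ atTop (𝓝 L₂))
    (h : ℝ → ℝ)
    (hh0 : ∀ x : ℝ, x ≤ 0 → h x = 0) (hh1 : ∀ x : ℝ, 1 ≤ x → h x = 1)
    (f : E 2 → ℝ) (hf : ∀ x : E 2, f x = h (x 0) * h (x 1)) :
    ∀ g ∈ NN φ 2 1,
      ENNReal.ofReal (1 / 4) ≤ ⨆ x : E 2, ENNReal.ofReal |f x - g x| := by
  intro g hg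
  obtain ⟨A, hA, hmix⟩ := NN_one_subset_parabolicMixedLimitZero hφ₁ hφ₂ hg
  obtain rfl : f = fun x => h (x 0) * h (x 1) := funext hf
  have hbound (σ τ c : ℝ) (hc : Tendsto (fun t => h (σ * t) * h (τ * t ^ 2)) atTop (𝓝 c)) :
      ENNReal.ofReal |c - A σ τ| ≤ ⨆ x : E 2, ENNReal.ofReal |h (x 0) * h (x 1) - g x| :=
    ofReal_abs_sub_le_iSup_of_tendsto (γ := parabolaPath σ τ) hc (hA σ τ)
  have hsum : (1 - A 1 1) - (0 - A 1 (-1)) - (0 - A (-1) 1) + (0 - A (-1) (-1)) = 1 := by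
    linarith
  rcases quarter_le_abs_of_sub_sub_add_eq_one hsum with hq | hq | hq | hq
  · exact (ENNReal.ofReal_le_ofReal hq).trans (hbound 1 1 1 (tendsto_step_mul_step_parabola hh1))
  · exact (ENNReal.ofReal_le_ofReal hq).trans
      (hbound 1 (-1) 0 (tendsto_step_mul_step_neg_parabola hh0 1))
  · exact (ENNReal.ofReal_le_ofReal hq).trans
      (hbound (-1) 1 0 (tendsto_step_neg_mul_step_parabola hh0 1))
  · exact (ENNReal.ofReal_le_ofReal hq).trans
      (hbound (-1) (-1) 0 (tendsto_step_neg_mul_step_parabola hh0 (-1)))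

/-- For `φ` continuous with distinct finite limits at `±∞`, the mollified AND
function `f(x,y) = h(x)h(y)` is at uniform distance at least `1/4` from every
one-layer network on `ℝ²`. -/
theorem stmt18 (φ : ℝ → ℝ) (hφc : Continuous φ)
    (L₁ L₂ : ℝ) (hφ₁ : Tendsto φ atBot (𝓝 L₁)) (hφ₂ : Tendsto φ atTop (𝓝 L₂))
    (hne : L₁ ≠ L₂)
    (h : ℝ → ℝ) (hhc : Continuous h)
    (hh₁ : ∃ L : ℝ, Tendsto h atBot (𝓝 L)) (hh₂ : ∃ L : ℝ, Tendsto h atTop (𝓝 L))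
    (hh0 : ∀ x : ℝ, x ≤ 0 → h x = 0) (hh1 : ∀ x : ℝ, 1 ≤ x → h x = 1)
    (f : E 2 → ℝ) (hf : ∀ x : E 2, f x = h (x 0) * h (x 1)) :
    ∀ g ∈ NN φ 2 1,
      ENNReal.ofReal (1 / 4) ≤ ⨆ x : E 2, ENNReal.ofReal |f x - g x| :=
  stmt18_general φ L₁ L₂ hφ₁ hφ₂ h hh0 hh1 f hf
end
end

section
/- Let m ∈ ℕ and n ∈ ℕ with n ≥ 2, let a₁, …, a_m ∈ ℝⁿ, and let f₁, …, f_m : ℝ → ℝ be arbitrary functions. Define f : ℝⁿ → ℝ by f(x) := ∑_{j=1}^m f_j(a_j·x). If f is continuous and vanishes at infinity (i.e., f ∈ C₀(ℝⁿ)), then f = 0. In particular, for every function φ : ℝ → ℝ, N¹_φ(ℝⁿ) ∩ C₀(ℝⁿ) = {0}. -/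
/-! Let `f = ∑ⱼ gⱼ ∘ ℓⱼ` tend to `0` at infinity, `ℓⱼ` linear functionals on a space of dimension
at least `2`. Translating by `v ∈ ker ℓₘ` leaves the last ridge unchanged, so `f(· + v) - f` is a
sum of `m - 1` ridge functions that still tends to `0` at infinity, hence vanishes by induction on
`m`. Thus `f` is constant along a line in `ker ℓₘ`; as this line escapes to infinity, `f = 0`.
Elements of `N¹_φ(ℝⁿ)` are such ridge sums with `ℓⱼ = ⟪aⱼ, ·⟫`. -/

open Filter Topology MeasureTheory

noncomputable section

open Bornology

theorem LinearMap.exists_ne_zero_apply_eq_zero {K V : Type*} [DivisionRing K] [AddCommGroup V]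
    [Module K V] (hV : 1 < Module.rank K V) (ℓ : V →ₗ[K] K) : ∃ w ≠ 0, ℓ w = 0 := by
  by_contra! hker
  have hinj : Function.Injective ℓ :=
    (injective_iff_map_eq_zero ℓ).2 fun w hw => by_contra fun hw0 => hker w hw0 hw
  have hrank := ℓ.lift_rank_le_of_injective hinj
  simp only [Module.rank_self, Cardinal.lift_one, Cardinal.lift_le_one_iff] at hrank
  exact hV.not_ge hrank

section RidgeSum

variable {F : Type*} [NormedAddCommGroup F] [NormedSpace ℝ F]

theorem tendsto_add_smul_atTop_cobounded (x : F) {w : F} (hw : w ≠ 0) :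
    Tendsto (fun s : ℝ => x + s • w) atTop (cobounded F) := by
  refine (tendsto_const_add_cobounded x).comp (tendsto_norm_atTop_iff_cobounded.1 ?_)
  simpa only [norm_smul] using tendsto_norm_atTop_atTop.atTop_mul_const (norm_pos_iff.2 hw)

theorem eq_of_tendsto_cobounded_of_add_smul_eq {Y : Type*} [TopologicalSpace Y] [T2Space Y]
    {f : F → Y} {y : Y} (h : Tendsto f (cobounded F) (𝓝 y)) {w : F} (hw : w ≠ 0)
    (hf : ∀ x (s : ℝ), f (x + s • w) = f x) (x : F) : f x = y := by
  have hline := h.comp (tendsto_add_smul_atTop_cobounded x hw)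
  simp only [Function.comp_def, hf] at hline
  exact tendsto_nhds_unique tendsto_const_nhds hline

theorem ridge_sum_eq_zero_of_tendsto_cobounded (hF : 1 < Module.rank ℝ F) :
    ∀ {m : ℕ} (ℓ : Fin m → F →ₗ[ℝ] ℝ) (g : Fin m → ℝ → ℝ),
      Tendsto (fun x => ∑ j, g j (ℓ j x)) (cobounded F) (𝓝 0) →
      (fun x => ∑ j, g j (ℓ j x)) = 0
  | 0, _, _, _ => by simp only [Finset.univ_eq_empty, Finset.sum_empty]; rfl
  | m + 1, ℓ, g, h => by
    set f : F → ℝ := fun x => ∑ j, g j (ℓ j x)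
    have hinv : ∀ v, ℓ (Fin.last m) v = 0 → ∀ x, f (x + v) = f x := by
      intro v hv
      let G : Fin m → ℝ → ℝ := fun j t => g j.castSucc (t + ℓ j.castSucc v) - g j.castSucc t
      have hdiff : (fun x => f (x + v) - f x) = fun x => ∑ j, G j (ℓ j.castSucc x) := by
        funext x
        simp only [f, G, Fin.sum_univ_castSucc, map_add, hv, add_zero, Finset.sum_sub_distrib]
        ring
      have hdiff_lim : Tendsto (fun x => f (x + v) - f x) (cobounded F) (𝓝 0) := by
        simpa using (h.comp (tendsto_add_const_cobounded v)).sub h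
      have hdiff_zero := ridge_sum_eq_zero_of_tendsto_cobounded hF (fun j => ℓ j.castSucc) G
        (hdiff ▸ hdiff_lim)
      rw [← hdiff] at hdiff_zero
      exact fun x => sub_eq_zero.1 (congrFun hdiff_zero x)
    obtain ⟨w, hw, hℓw⟩ := (ℓ (Fin.last m)).exists_ne_zero_apply_eq_zero hF
    funext x
    exact eq_of_tendsto_cobounded_of_add_smul_eq h hw
      (fun x s => hinv _ (by rw [map_smul, hℓw, smul_zero]) x) x

end RidgeSum

theorem exists_ridge_sum_of_mem_span {F : Type*} [NormedAddCommGroup F] [InnerProductSpace ℝ F]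
    {φ : ℝ → ℝ} {f : F → ℝ}
    (hf : f ∈ Submodule.span ℝ {f | ∃ (a : F) (b : ℝ), f = fun x => φ (inner ℝ a x + b)}) :
    ∃ (m : ℕ) (a : Fin m → F) (g : Fin m → ℝ → ℝ), f = fun x => ∑ j, g j (inner ℝ (a j) x) := by
  induction hf using Submodule.span_induction with
  | mem f hf =>
    obtain ⟨a, b, rfl⟩ := hf
    exact ⟨1, fun _ => a, fun _ t => φ (t + b), by simp⟩
  | zero => exact ⟨0, Fin.elim0, Fin.elim0, by funext x; simp⟩
  | add f₁ f₂ _ _ ih₁ ih₂ =>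
    obtain ⟨m₁, a₁, g₁, rfl⟩ := ih₁
    obtain ⟨m₂, a₂, g₂, rfl⟩ := ih₂
    refine ⟨m₁ + m₂, Fin.append a₁ a₂, Fin.append g₁ g₂, ?_⟩
    funext x
    simp [Fin.sum_univ_add]
  | smul c f _ ih =>
    obtain ⟨m, a, g, rfl⟩ := ih
    exact ⟨m, a, fun j t => c * g j t, by funext x; simp [Finset.mul_sum]⟩

theorem ridge_sum_eq_zero_of_mem_C0 {n : ℕ} (hn : 2 ≤ n) {m : ℕ} (a : Fin m → E n)
    (g : Fin m → ℝ → ℝ) (hC0 : (fun x : E n => ∑ j, g j (inner ℝ (a j) x)) ∈ C0 n) :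
    (fun x : E n => ∑ j, g j (inner ℝ (a j) x)) = 0 := by
  have hrank : 1 < Module.rank ℝ (E n) := by
    rw [← Module.finrank_eq_rank, finrank_euclideanSpace_fin]
    exact_mod_cast hn
  exact ridge_sum_eq_zero_of_tendsto_cobounded hrank (fun j => innerₛₗ ℝ (a j)) g
    (hC0.2.mono_left Metric.cobounded_le_cocompact)

/-- For `n ≥ 2`, a finite sum of ridge functions `x ↦ ∑ⱼ fⱼ(aⱼ·x)` that is
continuous and vanishes at infinity must be zero; in particular
`N¹_φ(ℝⁿ) ∩ C₀(ℝⁿ) = {0}` for every `φ`. -/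
theorem stmt19 (n : ℕ) (hn : 2 ≤ n) :
    (∀ (m : ℕ), 1 ≤ m → ∀ (a : Fin m → E n) (F : Fin m → ℝ → ℝ),
      (fun x : E n => ∑ j, F j (inner ℝ (a j) x : ℝ)) ∈ C0 n →
      (fun x : E n => ∑ j, F j (inner ℝ (a j) x : ℝ)) = 0) ∧
    (∀ φ : ℝ → ℝ, NN φ n 1 ∩ C0 n = {(0 : E n → ℝ)}) := by
  refine ⟨fun m _ a F hC0 => ridge_sum_eq_zero_of_mem_C0 hn a F hC0, fun φ => ?_⟩
  ext f
  constructor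
  · rintro ⟨hspan, hC0⟩
    obtain ⟨m, a, g, rfl⟩ := exists_ridge_sum_of_mem_span hspan
    exact ridge_sum_eq_zero_of_mem_C0 hn a g hC0
  · rintro rfl
    exact ⟨zero_mem _, continuous_const, tendsto_const_nhds⟩
end
end
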